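/- arXiv:2106.11561 — 4 statements merged into one kernel-verified Lean document; each statement's English description precedes it below -/
import Mathlib

section
/- Let f : [0,1] → ℝ have finite total variation V(f) on [0,1], and let u_1, …, u_n ∈ [0,1]. Then |∫_0^1 f(u) du − (1/n) Σ_{i=1}^n f(u_i)| ≤ V(f) · D*({u_i}_{i=1}^n), where D*({u_i}_{i=1}^n) = sup_{v ∈ [0,1]} | (1/n) Σ_{i=1}^n 1[u_i ∈ [0,v)] − v | is the star discrepancy of the point set. -/
open MeasureTheory

private lemma abel_aux (s G : ℕ → ℝ) (m : ℕ) :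
    ∑ i ∈ Finset.range m, (s (i+1) - s i) * G i
      = s m * G m - s 0 * G 0 - ∑ i ∈ Finset.range m, s (i+1) * (G (i+1) - G i) := by
  have h := Finset.sum_range_sub (fun i => s i * G i) m
  have h2 : ∀ i ∈ Finset.range m, (s (i+1) - s i) * G i
      = (s (i+1) * G (i+1) - s i * G i) - s (i+1) * (G (i+1) - G i) := by
    intro i _; ring
  rw [Finset.sum_congr rfl h2, Finset.sum_sub_distrib, h]

private lemma countFin {n : ℕ} (m : ℕ) (hm : m ≤ n) :
    ∑ i : Fin n, (if (i : ℕ) < m then (1:ℝ) else 0) = m := by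
  rw [Fin.sum_univ_eq_sum_range (fun j => if j < m then (1:ℝ) else 0) n]
  have h : ∀ j ∈ Finset.range n, (if j < m then (1:ℝ) else 0)
      = if j ∈ Finset.range m then 1 else 0 := by
    intro j _; simp [Finset.mem_range]
  rw [Finset.sum_congr rfl h, Finset.sum_ite_mem]
  have : Finset.range n ∩ Finset.range m = Finset.range m := by
    ext j; simp [Finset.mem_range]; omega
  rw [this, Finset.sum_const, Finset.card_range]; simp

/-- The star discrepancy of a point set `u_1, …, u_n ⊂ [0,1]`:
`D*({u_i}) = sup_{v ∈ [0,1]} | (1/n) ∑_i 1[u_i ∈ [0,v)] − v |`. -/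
noncomputable def starDisc {n : ℕ} (u : Fin n → ℝ) : ℝ :=
  ⨆ v : Set.Icc (0 : ℝ) 1,
    |(∑ i, if u i ∈ Set.Ico (0 : ℝ) (v : ℝ) then (1 : ℝ) else 0) / n - (v : ℝ)|

private lemma mono_KH {n : ℕ} (hn : 0 < n) (g : ℝ → ℝ)
    (hg : MonotoneOn g (Set.Icc 0 1))
    (u : Fin n → ℝ) (hu : ∀ i, u i ∈ Set.Icc (0:ℝ) 1) :
    |(∫ x in Set.Icc (0 : ℝ) 1, g x) - (∑ i, g (u i)) / n| ≤
      (g 1 - g 0) * starDisc u := by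
  have hn' : (0:ℝ) < n := by exact_mod_cast hn
  set σ := Tuple.sort u with hσ
  set v : Fin n → ℝ := u ∘ σ with hvdef
  have hv : Monotone v := Tuple.monotone_sort u
  have hvmem : ∀ i, v i ∈ Set.Icc (0:ℝ) 1 := fun i => hu _
  -- sorted extended points
  set w : ℕ → ℝ := fun k => if h : 1 ≤ k ∧ k ≤ n then v ⟨k-1, by omega⟩
    else if k = 0 then 0 else 1 with hwdef
  have w0 : w 0 = 0 := by simp [hwdef]
  have wlast : ∀ k, n < k → w k = 1 := by
    intro k hk
    have h1 : ¬ (1 ≤ k ∧ k ≤ n) := by omega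
    have h2 : k ≠ 0 := by omega
    simp [hwdef, h1, h2]
  have wv : ∀ k (h1 : 1 ≤ k) (h2 : k ≤ n), w k = v ⟨k-1, by omega⟩ := by
    intro k h1 h2; simp [hwdef, h1, h2]
  have wmem : ∀ k, w k ∈ Set.Icc (0:ℝ) 1 := by
    intro k
    by_cases h : 1 ≤ k ∧ k ≤ n
    · rw [wv k h.1 h.2]; exact hvmem _
    · rcases Nat.eq_zero_or_pos k with hk | hk
      · subst hk; rw [w0]; exact ⟨le_rfl, zero_le_one⟩
      · rw [wlast k (by omega)]; exact ⟨zero_le_one, le_rfl⟩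
  have wmono : Monotone w := by
    apply monotone_nat_of_le_succ
    intro k
    rcases Nat.eq_zero_or_pos k with hk | hk
    · subst hk; rw [w0]; exact (wmem 1).1
    · by_cases h2 : k + 1 ≤ n
      · rw [wv k hk (by omega), wv (k+1) (by omega) h2]
        exact hv (by simp only [Fin.mk_le_mk]; omega)
      · by_cases h3 : k ≤ n
        · rw [wlast (k+1) (by omega)]; exact (wmem k).2
        · rw [wlast k (by omega), wlast (k+1) (by omega)]
  -- discrepancy basics
  set D := starDisc u with hDdef
  have hbdd : BddAbove (Set.range fun p : Set.Icc (0:ℝ) 1 =>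
      |(∑ i, if u i ∈ Set.Ico (0:ℝ) (p:ℝ) then (1:ℝ) else 0) / n - (p:ℝ)|) := by
    refine ⟨2, ?_⟩
    rintro x ⟨p, rfl⟩
    have h1 : (0:ℝ) ≤ ∑ i, if u i ∈ Set.Ico (0:ℝ) (p:ℝ) then (1:ℝ) else 0 :=
      Finset.sum_nonneg (fun i _ => by split <;> norm_num)
    have h2 : (∑ i, if u i ∈ Set.Ico (0:ℝ) (p:ℝ) then (1:ℝ) else 0) ≤ n := by
      calc (∑ i, if u i ∈ Set.Ico (0:ℝ) (p:ℝ) then (1:ℝ) else 0)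
          ≤ ∑ _i : Fin n, (1:ℝ) := Finset.sum_le_sum (fun i _ => by split <;> norm_num)
        _ = n := by simp
    have hp0 : (0:ℝ) ≤ (p:ℝ) := p.2.1
    have hp1 : (p:ℝ) ≤ 1 := p.2.2
    have hd1 : (∑ i, if u i ∈ Set.Ico (0:ℝ) (p:ℝ) then (1:ℝ) else 0) / n ≤ 1 := by
      rw [div_le_one hn']; exact h2
    have hd0 : (0:ℝ) ≤ (∑ i, if u i ∈ Set.Ico (0:ℝ) (p:ℝ) then (1:ℝ) else 0) / n :=
      div_nonneg h1 hn'.le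
    rw [abs_le]; constructor <;> linarith
  have hDle : ∀ t ∈ Set.Icc (0:ℝ) 1,
      |(∑ i, if u i ∈ Set.Ico (0:ℝ) t then (1:ℝ) else 0) / n - t| ≤ D :=
    fun t ht => le_ciSup hbdd (⟨t, ht⟩ : Set.Icc (0:ℝ) 1)
  have hD0 : 0 ≤ D := le_trans (abs_nonneg _) (hDle 0 ⟨le_rfl, zero_le_one⟩)
  -- indicator sums via sorted points
  have hsum_ind : ∀ t : ℝ, (∑ i, if u i ∈ Set.Ico (0:ℝ) t then (1:ℝ) else 0)
      = ∑ i, if v i ∈ Set.Ico (0:ℝ) t then (1:ℝ) else 0 :=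
    fun t => (Equiv.sum_comp σ fun i => if u i ∈ Set.Ico (0:ℝ) t then (1:ℝ) else 0).symm
  have count_le : ∀ k, 1 ≤ k → k ≤ n →
      (∑ i, if v i ∈ Set.Ico (0:ℝ) (w k) then (1:ℝ) else 0) ≤ (k:ℝ) - 1 := by
    intro k h1 h2
    have : (∑ i, if v i ∈ Set.Ico (0:ℝ) (w k) then (1:ℝ) else 0)
        ≤ ∑ i : Fin n, (if (i:ℕ) < k - 1 then (1:ℝ) else 0) := by
      apply Finset.sum_le_sum
      intro j _
      by_cases hj : v j ∈ Set.Ico (0:ℝ) (w k)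
      · have hjlt : (j:ℕ) < k - 1 := by
          by_contra hge
          have hle : (⟨k-1, by omega⟩ : Fin n) ≤ j := by simp only [Fin.le_def]; omega
          have := hv hle
          rw [← wv k h1 h2] at this
          exact absurd hj.2 (not_lt.mpr this)
        simp [hj, hjlt]
      · simp only [if_neg hj]; split <;> norm_num
    refine this.trans ?_
    rw [countFin (k-1) (by omega), Nat.cast_sub h1, Nat.cast_one]
  have count_ge : ∀ k t, 1 ≤ k → k ≤ n → w k < t →
      (k:ℝ) ≤ ∑ i, if v i ∈ Set.Ico (0:ℝ) t then (1:ℝ) else 0 := by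
    intro k t h1 h2 hlt
    have : (∑ i : Fin n, (if (i:ℕ) < k then (1:ℝ) else 0))
        ≤ ∑ i, if v i ∈ Set.Ico (0:ℝ) t then (1:ℝ) else 0 := by
      apply Finset.sum_le_sum
      intro j _
      by_cases hj : (j:ℕ) < k
      · have hle : j ≤ (⟨k-1, by omega⟩ : Fin n) := by simp only [Fin.le_def]; omega
        have hvj : v j ≤ w k := by rw [wv k h1 h2]; exact hv hle
        have : v j ∈ Set.Ico (0:ℝ) t := ⟨(hvmem j).1, lt_of_le_of_lt hvj hlt⟩
        simp [hj, this]
      · simp only [if_neg hj]; split <;> norm_num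
    rw [countFin k h2] at this
    exact this
  have fact_a : ∀ k, 1 ≤ k → k ≤ n → (k:ℝ)/n - w k ≤ D := by
    intro k h1 h2
    by_cases hwk : w k = 1
    · have : (k:ℝ)/n ≤ 1 := by
        rw [div_le_one hn']; exact_mod_cast h2
      rw [hwk]; linarith
    · have hwk1 : w k < 1 := lt_of_le_of_ne (wmem k).2 hwk
      by_contra hcon
      push_neg at hcon
      set ε := ((k:ℝ)/n - w k - D)/2 with hεdef
      have hε : 0 < ε := by simp only [hεdef]; linarith
      set t := min (w k + ε) 1 with htdef
      have htgt : w k < t := lt_min (by linarith) hwk1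
      have htmem : t ∈ Set.Icc (0:ℝ) 1 :=
        ⟨le_trans (wmem k).1 htgt.le, min_le_right _ _⟩
      have hcount := count_ge k t h1 h2 htgt
      rw [← hsum_ind t] at hcount
      have habs := hDle t htmem
      have hdiv : (k:ℝ)/n ≤ (∑ i, if u i ∈ Set.Ico (0:ℝ) t then (1:ℝ) else 0) / n :=
        by gcongr
      have h3 : (∑ i, if u i ∈ Set.Ico (0:ℝ) t then (1:ℝ) else 0) / n - t ≤ D :=
        le_trans (le_abs_self _) habs
      have h4 : t ≤ w k + ε := min_le_left _ _
      simp only [hεdef] at *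
      linarith
  have fact_b : ∀ k, 1 ≤ k → k ≤ n → w k - ((k:ℝ) - 1)/n ≤ D := by
    intro k h1 h2
    have habs := hDle (w k) (wmem k)
    have hcount := count_le k h1 h2
    rw [← hsum_ind (w k)] at hcount
    have hdiv : (∑ i, if u i ∈ Set.Ico (0:ℝ) (w k) then (1:ℝ) else 0) / n ≤ ((k:ℝ)-1)/n :=
      by gcongr
    have h3 : w k - (∑ i, if u i ∈ Set.Ico (0:ℝ) (w k) then (1:ℝ) else 0) / n ≤ D := by
      have := neg_abs_le ((∑ i, if u i ∈ Set.Ico (0:ℝ) (w k) then (1:ℝ) else 0) / n - w k)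
      linarith [habs, abs_nonneg ((∑ i, if u i ∈ Set.Ico (0:ℝ) (w k) then (1:ℝ) else 0) / n - w k)]
    linarith
  -- integrability and telescoping
  have hgsub : ∀ i : ℕ, IntervalIntegrable g volume (w i) (w (i+1)) := by
    intro i
    apply MonotoneOn.intervalIntegrable
    apply hg.mono
    rw [Set.uIcc_of_le (wmono (Nat.le_succ i))]
    exact Set.Icc_subset_Icc (wmem i).1 (wmem (i+1)).2
  have htel : ∑ i ∈ Finset.range (n+1), ∫ x in (w i)..(w (i+1)), g x
      = ∫ x in (0:ℝ)..1, g x := by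
    have h := intervalIntegral.sum_integral_adjacent_intervals
      (μ := volume) (a := w) (n := n+1) (fun i _ => hgsub i)
    rw [w0, wlast (n+1) (by omega)] at h
    exact h
  have hIcc : (∫ x in Set.Icc (0:ℝ) 1, g x) = ∫ x in (0:ℝ)..1, g x := by
    rw [intervalIntegral.integral_of_le zero_le_one,
      MeasureTheory.integral_Icc_eq_integral_Ioc]
  have hup_piece : ∀ i : ℕ, (∫ x in (w i)..(w (i+1)), g x)
      ≤ (w (i+1) - w i) * g (w (i+1)) := by
    intro i
    have h := intervalIntegral.integral_mono_on (μ := volume)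
      (wmono (Nat.le_succ i)) (hgsub i) intervalIntegrable_const
      (fun x hx => hg ⟨le_trans (wmem i).1 hx.1, le_trans hx.2 (wmem (i+1)).2⟩
        (wmem (i+1)) hx.2)
    rwa [intervalIntegral.integral_const, smul_eq_mul] at h
  have hlo_piece : ∀ i : ℕ, (w (i+1) - w i) * g (w i)
      ≤ ∫ x in (w i)..(w (i+1)), g x := by
    intro i
    have h := intervalIntegral.integral_mono_on (μ := volume)
      (wmono (Nat.le_succ i)) intervalIntegrable_const (hgsub i)
      (fun x hx => hg (wmem i) ⟨le_trans (wmem i).1 hx.1, le_trans hx.2 (wmem (i+1)).2⟩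
        hx.1)
    rwa [intervalIntegral.integral_const, smul_eq_mul] at h
  -- points sum via w
  have hpts : (∑ i, g (u i)) = ∑ k ∈ Finset.range n, g (w (k+1)) := by
    have h1 : (∑ i, g (u i)) = ∑ i, g (v i) :=
      (Equiv.sum_comp σ fun i => g (u i)).symm
    have h2 : ∀ i : Fin n, g (v i) = g (w ((i:ℕ)+1)) := by
      intro i
      rw [wv ((i:ℕ)+1) (by omega) (by omega)]
      have h3 : (⟨(i:ℕ)+1-1, by omega⟩ : Fin n) = i := by ext; simp
      rw [h3]
    rw [h1, Finset.sum_congr rfl (fun i _ => h2 i),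
      Fin.sum_univ_eq_sum_range (fun k => g (w (k+1))) n]
  -- Abel machinery: upper bound
  set s1 : ℕ → ℝ := fun k => w k - ((min k n : ℕ) : ℝ)/n with hs1
  have s1zero : s1 0 = 0 := by simp [hs1, w0]
  have s1last : s1 (n+1) = 0 := by
    simp only [hs1]
    rw [wlast (n+1) (by omega), min_eq_right (by omega)]
    field_simp
    norm_num
  have coef1 : ∀ i ∈ Finset.range n, s1 (i+1) - s1 i = (w (i+1) - w i) - 1/n := by
    intro i hi
    have hi' := Finset.mem_range.mp hi
    simp only [hs1, min_eq_left (by omega : i+1 ≤ n), min_eq_left (by omega : i ≤ n)]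
    push_cast
    ring
  have coef1n : s1 (n+1) - s1 n = w (n+1) - w n := by
    simp only [hs1]
    rw [min_eq_right (by omega : n ≤ n+1), min_self]
    ring
  have hA : ∑ i ∈ Finset.range (n+1), (s1 (i+1) - s1 i) * g (w (i+1))
      = ∑ i ∈ Finset.range (n+1), (w (i+1) - w i) * g (w (i+1))
        - ∑ k ∈ Finset.range n, g (w (k+1)) * (1/n) := by
    rw [Finset.sum_range_succ, Finset.sum_range_succ
      (fun i => (w (i+1) - w i) * g (w (i+1))), coef1n]
    have h : ∀ i ∈ Finset.range n, (s1 (i+1) - s1 i) * g (w (i+1))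
        = (w (i+1) - w i) * g (w (i+1)) - g (w (i+1)) * (1/n) := by
      intro i hi; rw [coef1 i hi]; ring
    rw [Finset.sum_congr rfl h, Finset.sum_sub_distrib]
    ring
  have key1 : ∑ i ∈ Finset.range (n+1), (s1 (i+1) - s1 i) * g (w (i+1))
      = -∑ i ∈ Finset.range (n+1), s1 (i+1) * (g (w (i+1+1)) - g (w (i+1))) := by
    have h : ∑ i ∈ Finset.range (n+1), (s1 (i+1) - s1 i) * g (w (i+1))
        = s1 (n+1) * g (w (n+1+1)) - s1 0 * g (w (0+1))
          - ∑ i ∈ Finset.range (n+1), s1 (i+1) * (g (w (i+1+1)) - g (w (i+1))) :=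
      abel_aux s1 (fun k => g (w (k+1))) (n+1)
    rw [h, s1last, s1zero]; ring
  have hs1b : ∀ i ∈ Finset.range (n+1), -s1 (i+1) ≤ D := by
    intro i hi
    have hi' := Finset.mem_range.mp hi
    by_cases hin : i + 1 ≤ n
    · have h := fact_a (i+1) (by omega) hin
      simp only [hs1, min_eq_left hin]
      push_cast at h ⊢
      linarith
    · have hieq : i = n := by omega
      rw [hieq, s1last]; simpa using hD0
  have hbound1 : -∑ i ∈ Finset.range (n+1), s1 (i+1) * (g (w (i+1+1)) - g (w (i+1)))
      ≤ D * (g 1 - g 0) := by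
    have h1 : ∀ i ∈ Finset.range (n+1),
        -(s1 (i+1) * (g (w (i+1+1)) - g (w (i+1))))
          ≤ D * (g (w (i+1+1)) - g (w (i+1))) := by
      intro i hi
      have hΔ : 0 ≤ g (w (i+1+1)) - g (w (i+1)) :=
        sub_nonneg.mpr (hg (wmem _) (wmem _) (wmono (by omega)))
      have hs := hs1b i hi
      nlinarith
    calc -∑ i ∈ Finset.range (n+1), s1 (i+1) * (g (w (i+1+1)) - g (w (i+1)))
        = ∑ i ∈ Finset.range (n+1), -(s1 (i+1) * (g (w (i+1+1)) - g (w (i+1)))) := by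
          rw [← Finset.sum_neg_distrib]
      _ ≤ ∑ i ∈ Finset.range (n+1), D * (g (w (i+1+1)) - g (w (i+1))) :=
          Finset.sum_le_sum h1
      _ = D * ∑ i ∈ Finset.range (n+1), (g (w (i+1+1)) - g (w (i+1))) := by
          rw [Finset.mul_sum]
      _ = D * (g (w (n+1+1)) - g (w (0+1))) := by
          rw [Finset.sum_range_sub (fun k => g (w (k+1))) (n+1)]
      _ ≤ D * (g 1 - g 0) := by
          apply mul_le_mul_of_nonneg_left ?_ hD0
          rw [wlast (n+1+1) (by omega)]
          have hgw1 : g 0 ≤ g (w (0+1)) := hg ⟨le_rfl, zero_le_one⟩ (wmem 1) (wmem 1).1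
          linarith
  have hdivpts : (∑ i, g (u i))/n = ∑ k ∈ Finset.range n, g (w (k+1)) * (1/n) := by
    rw [hpts, Finset.sum_div]
    exact Finset.sum_congr rfl (fun k _ => by ring)
  have hup : (∫ x in Set.Icc (0:ℝ) 1, g x) - (∑ i, g (u i))/n ≤ D * (g 1 - g 0) := by
    have hints : (∫ x in Set.Icc (0:ℝ) 1, g x)
        = ∑ i ∈ Finset.range (n+1), ∫ x in (w i)..(w (i+1)), g x := by
      rw [hIcc, htel]
    have hsumle : (∑ i ∈ Finset.range (n+1), ∫ x in (w i)..(w (i+1)), g x)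
        ≤ ∑ i ∈ Finset.range (n+1), (w (i+1) - w i) * g (w (i+1)) :=
      Finset.sum_le_sum (fun i _ => hup_piece i)
    rw [hints, hdivpts]
    have h2 : (∑ i ∈ Finset.range (n+1), (w (i+1) - w i) * g (w (i+1)))
        - ∑ k ∈ Finset.range n, g (w (k+1)) * (1/n) ≤ D * (g 1 - g 0) := by
      rw [← hA, key1]; exact hbound1
    linarith
  -- Abel machinery: lower bound
  set s2 : ℕ → ℝ := fun k => if k = 0 then 0 else w k - ((min (k-1) n : ℕ) : ℝ)/n with hs2
  have s2zero : s2 0 = 0 := by simp [hs2]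
  have s2last : s2 (n+1) = 0 := by
    simp only [hs2]
    rw [if_neg (by omega), wlast (n+1) (by omega)]
    simp only [Nat.add_sub_cancel, min_self]
    field_simp
    norm_num
  have hB : ∑ i ∈ Finset.range (n+1), (s2 (i+1) - s2 i) * g (w i)
      = ∑ i ∈ Finset.range (n+1), (w (i+1) - w i) * g (w i)
        - ∑ k ∈ Finset.range n, g (w (k+1)) * (1/n) := by
    rw [Finset.sum_range_succ' (fun i => (s2 (i+1) - s2 i) * g (w i)) n,
      Finset.sum_range_succ' (fun i => (w (i+1) - w i) * g (w i)) n]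
    have hc0 : (s2 (0+1) - s2 0) * g (w 0) = (w (0+1) - w 0) * g (w 0) := by
      simp only [hs2, if_neg (Nat.one_ne_zero), if_pos rfl]
      rw [w0]
      norm_num
    have hc : ∀ i ∈ Finset.range n, (s2 (i+1+1) - s2 (i+1)) * g (w (i+1))
        = (w (i+1+1) - w (i+1)) * g (w (i+1)) - g (w (i+1)) * (1/n) := by
      intro i hi
      have hi' := Finset.mem_range.mp hi
      simp only [hs2, if_neg (by omega : ¬ i+1+1 = 0), if_neg (by omega : ¬ i+1 = 0),
        Nat.add_sub_cancel, min_eq_left (by omega : i+1 ≤ n), min_eq_left (by omega : i ≤ n)]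
      push_cast
      ring
    rw [hc0, Finset.sum_congr rfl hc, Finset.sum_sub_distrib]
    ring
  have key2 : ∑ i ∈ Finset.range (n+1), (s2 (i+1) - s2 i) * g (w i)
      = -∑ i ∈ Finset.range (n+1), s2 (i+1) * (g (w (i+1)) - g (w i)) := by
    have h : ∑ i ∈ Finset.range (n+1), (s2 (i+1) - s2 i) * g (w i)
        = s2 (n+1) * g (w (n+1)) - s2 0 * g (w 0)
          - ∑ i ∈ Finset.range (n+1), s2 (i+1) * (g (w (i+1)) - g (w i)) :=
      abel_aux s2 (fun k => g (w k)) (n+1)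
    rw [h, s2last, s2zero]; ring
  have hs2b : ∀ i ∈ Finset.range (n+1), s2 (i+1) ≤ D := by
    intro i hi
    have hi' := Finset.mem_range.mp hi
    by_cases hin : i + 1 ≤ n
    · have h := fact_b (i+1) (by omega) hin
      simp only [hs2, if_neg (by omega : ¬ i+1 = 0), Nat.add_sub_cancel,
        min_eq_left (by omega : i ≤ n)]
      push_cast at h ⊢
      ring_nf at h ⊢
      linarith
    · have hieq : i = n := by omega
      rw [hieq, s2last]; exact hD0
  have hbound2 : -(D * (g 1 - g 0))
      ≤ -∑ i ∈ Finset.range (n+1), s2 (i+1) * (g (w (i+1)) - g (w i)) := by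
    have h1 : ∀ i ∈ Finset.range (n+1),
        s2 (i+1) * (g (w (i+1)) - g (w i)) ≤ D * (g (w (i+1)) - g (w i)) := by
      intro i hi
      have hΔ : 0 ≤ g (w (i+1)) - g (w i) :=
        sub_nonneg.mpr (hg (wmem _) (wmem _) (wmono (by omega)))
      have hs := hs2b i hi
      nlinarith
    have h2 : (∑ i ∈ Finset.range (n+1), s2 (i+1) * (g (w (i+1)) - g (w i)))
        ≤ D * (g 1 - g 0) := by
      calc (∑ i ∈ Finset.range (n+1), s2 (i+1) * (g (w (i+1)) - g (w i)))
          ≤ ∑ i ∈ Finset.range (n+1), D * (g (w (i+1)) - g (w i)) :=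
            Finset.sum_le_sum h1
        _ = D * ∑ i ∈ Finset.range (n+1), (g (w (i+1)) - g (w i)) := by
            rw [Finset.mul_sum]
        _ = D * (g (w (n+1)) - g (w 0)) := by
            rw [Finset.sum_range_sub (fun k => g (w k)) (n+1)]
        _ = D * (g 1 - g 0) := by rw [wlast (n+1) (by omega), w0]
    linarith
  have hlo : -(D * (g 1 - g 0)) ≤ (∫ x in Set.Icc (0:ℝ) 1, g x) - (∑ i, g (u i))/n := by
    have hints : (∫ x in Set.Icc (0:ℝ) 1, g x)
        = ∑ i ∈ Finset.range (n+1), ∫ x in (w i)..(w (i+1)), g x := by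
      rw [hIcc, htel]
    have hsumge : (∑ i ∈ Finset.range (n+1), (w (i+1) - w i) * g (w i))
        ≤ ∑ i ∈ Finset.range (n+1), ∫ x in (w i)..(w (i+1)), g x :=
      Finset.sum_le_sum (fun i _ => hlo_piece i)
    rw [hints, hdivpts]
    have h2 : -(D * (g 1 - g 0))
        ≤ (∑ i ∈ Finset.range (n+1), (w (i+1) - w i) * g (w i))
          - ∑ k ∈ Finset.range n, g (w (k+1)) * (1/n) := by
      rw [← hB, key2]; exact hbound2
    linarith
  have hcomm : (g 1 - g 0) * D = D * (g 1 - g 0) := mul_comm _ _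
  rw [hcomm, abs_le]
  exact ⟨hlo, hup⟩

/-- The one-dimensional Koksma–Hlawka inequality: if `f` has finite total variation on `[0,1]`
then the quadrature error of the points `u_1, …, u_n` is bounded by the total variation of `f`
times the star discrepancy of the point set. -/
theorem koksma_hlawka_one_dim (f : ℝ → ℝ)
    (hf : eVariationOn f (Set.Icc 0 1) ≠ ⊤)
    {n : ℕ} (hn : 0 < n) (u : Fin n → ℝ) (hu : ∀ i, u i ∈ Set.Icc (0 : ℝ) 1) :
    |(∫ x in Set.Icc (0 : ℝ) 1, f x) - (∑ i, f (u i)) / n| ≤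
      (eVariationOn f (Set.Icc 0 1)).toReal * starDisc u := by
  have h01 : (0:ℝ) ∈ Set.Icc (0:ℝ) 1 := ⟨le_rfl, zero_le_one⟩
  have hlbv : LocallyBoundedVariationOn f (Set.Icc 0 1) := fun x y _ _ =>
    ne_top_of_le_ne_top hf (eVariationOn.mono f Set.inter_subset_left)
  set vF : ℝ → ℝ := variationOnFromTo f (Set.Icc 0 1) 0 with hvF
  have hkey : ∀ x ∈ Set.Icc (0:ℝ) 1, ∀ y ∈ Set.Icc (0:ℝ) 1, x ≤ y →
      |f y - f x| ≤ vF y - vF x := by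
    intro x hx y hy hxy
    have hadd := variationOnFromTo.add hlbv h01 hx hy
    have hd : |f y - f x| ≤ variationOnFromTo f (Set.Icc 0 1) x y := by
      rw [variationOnFromTo.eq_of_le f _ hxy]
      have hb : BoundedVariationOn f (Set.Icc 0 1 ∩ Set.Icc x y) := hlbv x y hx hy
      have h2 := hb.dist_le (x := y) (y := x) ⟨hy, hxy, le_rfl⟩ ⟨hx, le_rfl, hxy⟩
      rwa [Real.dist_eq] at h2
    linarith
  set p : ℝ → ℝ := fun x => (vF x + f x)/2 with hp
  set q : ℝ → ℝ := fun x => (vF x - f x)/2 with hq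
  have hpm : MonotoneOn p (Set.Icc 0 1) := by
    intro x hx y hy hxy
    have h1 := hkey x hx y hy hxy
    have h2 : f x - f y ≤ |f y - f x| := by rw [abs_sub_comm]; exact le_abs_self _
    simp only [hp]
    linarith
  have hqm : MonotoneOn q (Set.Icc 0 1) := by
    intro x hx y hy hxy
    have h1 := hkey x hx y hy hxy
    have h2 : f y - f x ≤ |f y - f x| := le_abs_self _
    simp only [hq]
    linarith
  have hKHp := mono_KH hn p hpm u hu
  have hKHq := mono_KH hn q hqm u hu
  have hvF0 : vF 0 = 0 := variationOnFromTo.self f _ 0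
  have hvF1 : vF 1 = (eVariationOn f (Set.Icc 0 1)).toReal := by
    show variationOnFromTo f (Set.Icc 0 1) 0 1 = (eVariationOn f (Set.Icc 0 1)).toReal
    rw [variationOnFromTo.eq_of_le f _ zero_le_one, Set.inter_self]
  have hpint : IntegrableOn p (Set.Icc (0:ℝ) 1) volume :=
    hpm.integrableOn_isCompact isCompact_Icc
  have hqint : IntegrableOn q (Set.Icc (0:ℝ) 1) volume :=
    hqm.integrableOn_isCompact isCompact_Icc
  have hfpq : ∀ x, f x = p x - q x := fun x => by simp only [hp, hq]; ring
  have hintf : (∫ x in Set.Icc (0:ℝ) 1, f x)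
      = (∫ x in Set.Icc (0:ℝ) 1, p x) - ∫ x in Set.Icc (0:ℝ) 1, q x := by
    rw [← MeasureTheory.integral_sub hpint hqint]
    apply MeasureTheory.integral_congr_ae
    exact Filter.EventuallyEq.of_eq (funext hfpq)
  have hsumf : (∑ i, f (u i)) = (∑ i, p (u i)) - ∑ i, q (u i) := by
    rw [← Finset.sum_sub_distrib]
    exact Finset.sum_congr rfl (fun i _ => hfpq (u i))
  have hsplit : (∫ x in Set.Icc (0:ℝ) 1, f x) - (∑ i, f (u i))/n
      = ((∫ x in Set.Icc (0:ℝ) 1, p x) - (∑ i, p (u i))/n)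
        - ((∫ x in Set.Icc (0:ℝ) 1, q x) - (∑ i, q (u i))/n) := by
    rw [hintf, hsumf]
    ring
  have hsum : (p 1 - p 0) + (q 1 - q 0) = (eVariationOn f (Set.Icc 0 1)).toReal := by
    simp only [hp, hq]
    rw [← hvF1]
    rw [hvF0]
    ring
  calc |(∫ x in Set.Icc (0 : ℝ) 1, f x) - (∑ i, f (u i)) / n|
      = |((∫ x in Set.Icc (0:ℝ) 1, p x) - (∑ i, p (u i))/n)
          - ((∫ x in Set.Icc (0:ℝ) 1, q x) - (∑ i, q (u i))/n)| := by rw [hsplit]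
    _ ≤ |(∫ x in Set.Icc (0:ℝ) 1, p x) - (∑ i, p (u i))/n|
          + |(∫ x in Set.Icc (0:ℝ) 1, q x) - (∑ i, q (u i))/n| := abs_sub _ _
    _ ≤ (p 1 - p 0) * starDisc u + (q 1 - q 0) * starDisc u := add_le_add hKHp hKHq
    _ = ((p 1 - p 0) + (q 1 - q 0)) * starDisc u := by ring
    _ = (eVariationOn f (Set.Icc 0 1)).toReal * starDisc u := by rw [hsum]
end

section
/- Let G : [0,1] → ℝ have finite total variation V(G), let M > 0, and let c(x,y) = M·|x−y| for x,y ∈ ℝ (the metric induced by a norm on ℝ). Let u_1, …, u_n ∈ [0,1] with star discrepancy D*({u_i}_{i=1}^n). Then for every function f : ℝ → ℝ satisfying |f(x) − f(y)| ≤ c(x,y) for all x,y ∈ ℝ, one has |∫_0^1 f(G(u)) du − (1/n) Σ_{i=1}^n f(G(u_i))| ≤ M · V(G) · D*({u_i}_{i=1}^n). Consequently, the supremum over all such c-Lipschitz functions f of the left-hand side (which by Kantorovich–Rubinstein duality equals the Wasserstein-1 distance W_{c,1}(P, Pⁿ) between P, the pushforward of the uniform distribution on [0,1] under G, and the empirical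 measure Pⁿ = (1/n) Σ_{i=1}^n δ_{G(u_i)}) is at most M · V(G) · D*({u_i}_{i=1}^n). -/
open MeasureTheory

section KoksmaAux
open Set

lemma mono_piece_bound {h : ℝ → ℝ} {a b s D : ℝ} (hab : a ≤ b) (hD0 : 0 ≤ D)
    (hm : MonotoneOn h (Set.Icc a b)) (h1 : s - a ≤ D) (h2 : b - s ≤ D) :
    |(∫ t in a..b, (h t - h a)) + (s - b) * (h b - h a)| ≤ D * (h b - h a) := by
  have ha : a ∈ Icc a b := ⟨le_rfl, hab⟩
  have hb : b ∈ Icc a b := ⟨hab, le_rfl⟩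
  have hP : 0 ≤ h b - h a := sub_nonneg.2 (hm ha hb hab)
  have hint : IntervalIntegrable (fun t => h t - h a) volume a b := by
    have : MonotoneOn (fun t => h t - h a) (uIcc a b) := by
      rw [uIcc_of_le hab]; exact fun x hx y hy hxy => by
        simpa using sub_le_sub_right (hm hx hy hxy) (h a)
    exact this.intervalIntegrable
  have hup : (∫ t in a..b, (h t - h a)) ≤ (b - a) * (h b - h a) := by
    have := intervalIntegral.integral_mono_on hab hint
      (intervalIntegrable_const (c := h b - h a)) (fun x hx => sub_le_sub_right (hm hx hb hx.2) _)
    simp only [intervalIntegral.integral_const, smul_eq_mul] at this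
    linarith
  have hlo : 0 ≤ (∫ t in a..b, (h t - h a)) := by
    have := intervalIntegral.integral_mono_on hab (intervalIntegrable_const (c := (0:ℝ)))
      hint (fun x hx => sub_nonneg.2 (hm ha hx hx.1))
    simpa using this
  rw [abs_le]
  constructor
  · have : -(D * (h b - h a)) ≤ (s - b) * (h b - h a) := by nlinarith
    nlinarith
  · nlinarith

lemma jordan_decomp {F : ℝ → ℝ} {a b : ℝ} (hab : a ≤ b)
    (hF : eVariationOn F (Set.Icc a b) ≠ ⊤) :
    ∃ p q : ℝ → ℝ, MonotoneOn p (Set.Icc a b) ∧ MonotoneOn q (Set.Icc a b) ∧ p a = 0 ∧ q a = 0 ∧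
      (∀ t, F t - F a = p t - q t) ∧ p b + q b = (eVariationOn F (Set.Icc a b)).toReal := by
  have ha : a ∈ Icc a b := ⟨le_rfl, hab⟩
  have hBV : LocallyBoundedVariationOn F (Icc a b) := fun x y _ _ =>
    ne_top_of_le_ne_top hF (eVariationOn.mono F inter_subset_left)
  set w : ℝ → ℝ := variationOnFromTo F (Icc a b) a with hw
  have key : ∀ ⦃x⦄, x ∈ Icc a b → ∀ ⦃y⦄, y ∈ Icc a b → x ≤ y →
      |F y - F x| ≤ w y - w x := by
    intro x hx y hy hxy
    have hadd : w x + variationOnFromTo F (Icc a b) x y = w y :=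
      variationOnFromTo.add hBV ha hx hy
    have : |F y - F x| ≤ variationOnFromTo F (Icc a b) x y := by
      rw [variationOnFromTo.eq_of_le F _ hxy]
      have : edist (F y) (F x) ≤ eVariationOn F (Icc a b ∩ Icc x y) :=
        eVariationOn.edist_le F ⟨hy, hxy, le_rfl⟩ ⟨hx, le_rfl, hxy⟩
      calc |F y - F x| = dist (F y) (F x) := (Real.dist_eq _ _).symm
        _ = (edist (F y) (F x)).toReal := dist_edist _ _
        _ ≤ _ := ENNReal.toReal_mono (hBV x y hx hy) this
    linarith [hadd]
  refine ⟨fun t => (w t + (F t - F a)) / 2, fun t => (w t - (F t - F a)) / 2, ?_, ?_, ?_, ?_, ?_, ?_⟩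
  · intro x hx y hy hxy
    have := key hx hy hxy
    rw [abs_le] at this
    dsimp only; linarith [this.1, this.2]
  · intro x hx y hy hxy
    have := key hx hy hxy
    rw [abs_le] at this
    dsimp only; linarith [this.1, this.2]
  · simp [hw, variationOnFromTo.self]
  · simp [hw, variationOnFromTo.self]
  · intro t; ring
  · have : w b = (eVariationOn F (Icc a b)).toReal := by
      rw [hw, variationOnFromTo.eq_of_le F _ hab, Set.inter_self]
    dsimp only; rw [← this]; ring

lemma bv_intervalIntegrable {F : ℝ → ℝ} {a b : ℝ} (hab : a ≤ b)
    (hF : eVariationOn F (Set.Icc a b) ≠ ⊤) : IntervalIntegrable F volume a b := by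
  obtain ⟨p, q, hp, hq, _, _, hpq, _⟩ := jordan_decomp hab hF
  have hip : IntervalIntegrable p volume a b := (uIcc_of_le hab ▸ hp).intervalIntegrable
  have hiq : IntervalIntegrable q volume a b := (uIcc_of_le hab ▸ hq).intervalIntegrable
  have : F = fun t => (p t - q t) + F a := by
    funext t; have := hpq t; linarith
  rw [this]
  exact (hip.sub hiq).add intervalIntegrable_const

lemma piece_bound {F : ℝ → ℝ} {a b s D : ℝ} (hab : a ≤ b) (hD0 : 0 ≤ D)
    (hF : eVariationOn F (Set.Icc a b) ≠ ⊤)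
    (h1 : s - a ≤ D) (h2 : b - s ≤ D) :
    |(∫ t in a..b, (F t - F a)) + (s - b) * (F b - F a)| ≤
      D * (eVariationOn F (Set.Icc a b)).toReal := by
  obtain ⟨p, q, hp, hq, hpa, hqa, hpq, hsum⟩ := jordan_decomp hab hF
  have hip : IntervalIntegrable p volume a b := (uIcc_of_le hab ▸ hp).intervalIntegrable
  have hiq : IntervalIntegrable q volume a b := (uIcc_of_le hab ▸ hq).intervalIntegrable
  have hI : (∫ t in a..b, (F t - F a)) = (∫ t in a..b, (p t - p a)) - ∫ t in a..b, (q t - q a) := by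
    rw [← intervalIntegral.integral_sub (by simpa [hpa] using hip) (by simpa [hqa] using hiq)]
    congr 1; funext t; rw [hpq t, hpa, hqa]; ring
  have hsplit : (∫ t in a..b, (F t - F a)) + (s - b) * (F b - F a) =
      ((∫ t in a..b, (p t - p a)) + (s - b) * (p b - p a)) -
      ((∫ t in a..b, (q t - q a)) + (s - b) * (q b - q a)) := by
    rw [hI, hpq b, hpa, hqa]; ring
  rw [hsplit]
  have Bp := mono_piece_bound hab hD0 hp h1 h2
  have Bq := mono_piece_bound hab hD0 hq h1 h2
  calc _ ≤ _ := abs_sub _ _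
    _ ≤ D * (p b - p a) + D * (q b - q a) := add_le_add Bp Bq
    _ = D * (eVariationOn F (Set.Icc a b)).toReal := by rw [← hsum, hpa, hqa]; ring

lemma koksma_identity (F : ℝ → ℝ) (n : ℕ) (hn : 0 < n) (y : ℕ → ℝ)
    (h0 : y 0 = 0) (h1 : y (n + 1) = 1)
    (hint : ∀ k, k ≤ n → IntervalIntegrable F volume (y k) (y (k + 1))) :
    (∫ x in (0:ℝ)..1, F x) - (∑ k ∈ Finset.range n, F (y (k + 1))) / n =
      ∑ k ∈ Finset.range (n + 1),
        ((∫ t in y k..y (k + 1), (F t - F (y k))) +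
          ((k : ℝ) / n - y (k + 1)) * (F (y (k + 1)) - F (y k))) := by
  have hn' : (n : ℝ) ≠ 0 := Nat.cast_ne_zero.2 hn.ne'
  have hterm : ∀ k ∈ Finset.range (n + 1),
      ((∫ t in y k..y (k + 1), (F t - F (y k))) +
        ((k : ℝ) / n - y (k + 1)) * (F (y (k + 1)) - F (y k))) =
      (∫ t in y k..y (k + 1), F t)
        - (y (k + 1) * F (y (k + 1)) - y k * F (y k))
        + (((k + 1 : ℕ) : ℝ) / n * F (y (k + 1)) - (k : ℝ) / n * F (y k))
        - F (y (k + 1)) / n := by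
    intro k hk
    rw [Finset.mem_range] at hk
    have hki : k ≤ n := Nat.lt_succ_iff.1 hk
    rw [intervalIntegral.integral_sub (hint k hki) intervalIntegrable_const,
      intervalIntegral.integral_const]
    push_cast
    simp only [smul_eq_mul]
    field_simp
    ring
  rw [Finset.sum_congr rfl hterm]
  rw [Finset.sum_sub_distrib, Finset.sum_add_distrib, Finset.sum_sub_distrib]
  have e1 : ∑ k ∈ Finset.range (n + 1), (∫ t in y k..y (k + 1), F t) = ∫ x in (0:ℝ)..1, F x := by
    have := intervalIntegral.sum_integral_adjacent_intervals (a := y) (n := n + 1)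
      (fun k hk => hint k (Nat.lt_succ_iff.1 hk))
    rw [this, h0, h1]
  have e2 : ∑ k ∈ Finset.range (n + 1), (y (k + 1) * F (y (k + 1)) - y k * F (y k))
      = y (n + 1) * F (y (n + 1)) - y 0 * F (y 0) :=
    Finset.sum_range_sub (fun k => y k * F (y k)) (n + 1)
  have e3 : ∑ k ∈ Finset.range (n + 1),
      (((k + 1 : ℕ) : ℝ) / n * F (y (k + 1)) - (k : ℝ) / n * F (y k))
      = ((n + 1 : ℕ) : ℝ) / n * F (y (n + 1)) - ((0 : ℕ) : ℝ) / n * F (y 0) :=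
    Finset.sum_range_sub (fun k => (k : ℝ) / n * F (y k)) (n + 1)
  have e4 : ∑ k ∈ Finset.range (n + 1), F (y (k + 1)) / n
      = (∑ k ∈ Finset.range n, F (y (k + 1))) / n + F (y (n + 1)) / n := by
    rw [Finset.sum_range_succ, Finset.sum_div]
  rw [e1, e2, e3, e4, h0, h1]
  push_cast
  field_simp
  ring

end KoksmaAux

/-- QMC bound for the Wasserstein-1 distance of a one-dimensional generative model:
if `G : [0,1] → ℝ` has finite total variation `V(G)` and `c(x,y) = M|x−y|`, then for every
`c`-Lipschitz function `f` the quadrature error is at most `M · V(G) · D*({u_i})`, and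
consequently the supremum over all such `f` (which is the Wasserstein-1 distance
`W_{c,1}(P, Pⁿ)` by Kantorovich–Rubinstein duality) obeys the same bound. -/
theorem wasserstein_dual_qmc_bound (G : ℝ → ℝ)
    (hG : eVariationOn G (Set.Icc 0 1) ≠ ⊤)
    (M : ℝ) (hM : 0 < M)
    {n : ℕ} (hn : 0 < n) (u : Fin n → ℝ) (hu : ∀ i, u i ∈ Set.Icc (0 : ℝ) 1) :
    (∀ f : ℝ → ℝ, (∀ x y, |f x - f y| ≤ M * |x - y|) →
      |(∫ x in Set.Icc (0 : ℝ) 1, f (G x)) - (∑ i, f (G (u i))) / n| ≤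
        M * (eVariationOn G (Set.Icc 0 1)).toReal * starDisc u) ∧
    (⨆ f : {f : ℝ → ℝ // ∀ x y, |f x - f y| ≤ M * |x - y|},
        |(∫ x in Set.Icc (0 : ℝ) 1, (f : ℝ → ℝ) (G x)) - (∑ i, (f : ℝ → ℝ) (G (u i))) / n|) ≤
      M * (eVariationOn G (Set.Icc 0 1)).toReal * starDisc u := by
  have hn' : (n : ℝ) ≠ 0 := Nat.cast_ne_zero.2 hn.ne'
  have hnpos : (0:ℝ) < n := Nat.cast_pos.2 hn
  set N : ℝ → ℝ := fun v => ∑ i, if u i ∈ Set.Ico (0 : ℝ) v then (1 : ℝ) else 0 with hN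
  set D := starDisc u with hDdef
  -- basic bounds on N
  have hN0 : ∀ v, 0 ≤ N v := fun v =>
    Finset.sum_nonneg fun i _ => by positivity
  have hNn : ∀ v, N v ≤ n := fun v => by
    calc N v ≤ ∑ _i : Fin n, (1:ℝ) := Finset.sum_le_sum fun i _ => by split <;> norm_num
      _ = n := by simp
  -- D is at least each term
  have hDge : ∀ v : ℝ, v ∈ Set.Icc (0:ℝ) 1 → |N v / n - v| ≤ D := by
    intro v hv
    have hbdd : BddAbove (Set.range fun v : Set.Icc (0:ℝ) 1 =>
        |N v / n - (v:ℝ)|) := by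
      refine ⟨2, ?_⟩
      rintro _ ⟨w, rfl⟩
      have h1 : (0:ℝ) ≤ N w / n := div_nonneg (hN0 w) hnpos.le
      have h2 : N w / n ≤ 1 := (div_le_one hnpos).2 (hNn w)
      have := w.2
      rw [abs_le]; constructor <;> [nlinarith [w.2.1, w.2.2]; nlinarith [w.2.1, w.2.2]]
    exact le_ciSup hbdd (⟨v, hv⟩ : Set.Icc (0:ℝ) 1)
  have hD0 : 0 ≤ D := by
    have := hDge 0 ⟨le_rfl, zero_le_one⟩
    exact (abs_nonneg _).trans this
  -- sorted points
  set σ := Tuple.sort u with hσ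
  set x : Fin n → ℝ := u ∘ σ with hxdef
  have hx : Monotone x := Tuple.monotone_sort u
  have hxmem : ∀ j, x j ∈ Set.Icc (0:ℝ) 1 := fun j => hu (σ j)
  -- padded sequence
  set y : ℕ → ℝ := fun k => if k = 0 then 0 else if h : k ≤ n then x ⟨k - 1, by omega⟩ else 1
    with hydef
  have hy0 : y 0 = 0 := by simp [hydef]
  have hyn1 : y (n + 1) = 1 := by
    simp only [hydef]
    rw [if_neg (by omega), dif_neg (by omega)]
  have hyval : ∀ k (h1 : 1 ≤ k) (h2 : k ≤ n), y k = x ⟨k - 1, by omega⟩ := by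
    intro k h1 h2
    simp only [hydef, if_neg (by omega : ¬ k = 0), dif_pos h2]
  have hymem : ∀ k, k ≤ n + 1 → y k ∈ Set.Icc (0:ℝ) 1 := by
    intro k hk
    rcases Nat.eq_zero_or_pos k with rfl | hk1
    · rw [hy0]; exact ⟨le_rfl, zero_le_one⟩
    rcases Nat.lt_or_ge k (n+1) with h | h
    · rw [hyval k hk1 (by omega)]; exact hxmem _
    · have : k = n + 1 := le_antisymm hk h
      rw [this, hyn1]; exact ⟨zero_le_one, le_rfl⟩
  have hystep : ∀ k, k ≤ n → y k ≤ y (k + 1) := by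
    intro k hk
    rcases Nat.eq_zero_or_pos k with rfl | hk1
    · rw [hy0]; exact (hymem 1 (by omega)).1
    rcases Nat.lt_or_ge k n with h | h
    · rw [hyval k hk1 hk, hyval (k+1) (by omega) (by omega)]
      exact hx (by simp only [Fin.le_def]; omega)
    · have hkn : k = n := le_antisymm hk h
      rw [hkn, hyn1]
      exact (hymem n (by omega)).2
  -- counting bounds
  have hsum_perm : ∀ g : ℝ → ℝ, (∑ i, g (u i)) = ∑ j, g (x j) := by
    intro g
    rw [hxdef]
    exact (Equiv.sum_comp σ (fun i => g (u i))).symm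
  have hcount_ge : ∀ k, k ≤ n → ∀ v, y k < v → (k : ℝ) ≤ N v := by
    intro k hk v hv
    have : N v = ∑ j, (if x j ∈ Set.Ico (0:ℝ) v then (1:ℝ) else 0) := by
      rw [hN]; exact hsum_perm (fun t => if t ∈ Set.Ico (0:ℝ) v then (1:ℝ) else 0)
    rw [this]
    have step : ∀ j : Fin n, (if (j:ℕ) < k then (1:ℝ) else 0) ≤
        (if x j ∈ Set.Ico (0:ℝ) v then (1:ℝ) else 0) := by
      intro j
      by_cases hj : (j:ℕ) < k
      · have hk1 : 1 ≤ k := by omega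
        have hxy : x j ≤ y k := by
          rw [hyval k hk1 hk]
          exact hx (by simp only [Fin.le_def]; omega)
        rw [if_pos hj, if_pos ⟨(hxmem j).1, lt_of_le_of_lt hxy hv⟩]
      · rw [if_neg hj]; positivity
    calc (k:ℝ) = ∑ j ∈ Finset.range n, (if j < k then (1:ℝ) else 0) := by
          rw [Finset.sum_boole]
          congr 1
          rw [show (Finset.range n).filter (fun j => j < k) = Finset.range k by
            ext j; simp; omega]
          simp
      _ = ∑ j : Fin n, (if (j:ℕ) < k then (1:ℝ) else 0) :=
          (Fin.sum_univ_eq_sum_range (fun j => if j < k then (1:ℝ) else 0) n).symm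
      _ ≤ _ := Finset.sum_le_sum fun j _ => step j
  have hcount_le : ∀ k, k ≤ n → N (y (k + 1)) ≤ (k : ℝ) := by
    intro k hk
    have : N (y (k+1)) = ∑ j, (if x j ∈ Set.Ico (0:ℝ) (y (k+1)) then (1:ℝ) else 0) := by
      rw [hN]; exact hsum_perm (fun t => if t ∈ Set.Ico (0:ℝ) (y (k+1)) then (1:ℝ) else 0)
    rw [this]
    have step : ∀ j : Fin n, (if x j ∈ Set.Ico (0:ℝ) (y (k+1)) then (1:ℝ) else 0) ≤
        (if (j:ℕ) < k then (1:ℝ) else 0) := by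
      intro j
      by_cases hj : (j:ℕ) < k
      · rw [if_pos hj]; split <;> norm_num
      · rw [if_neg hj]
        have hjk : k ≤ (j:ℕ) := by omega
        have hkn2 : k + 1 ≤ n := by omega
        have : y (k+1) ≤ x j := by
          rw [hyval (k+1) (by omega) hkn2]
          exact hx (by simp only [Fin.le_def]; omega)
        rw [if_neg (by rintro ⟨-, h⟩; exact absurd this (not_le.2 h))]
    calc (∑ j : Fin n, (if x j ∈ Set.Ico (0:ℝ) (y (k+1)) then (1:ℝ) else 0))
        ≤ ∑ j : Fin n, (if (j:ℕ) < k then (1:ℝ) else 0) := Finset.sum_le_sum fun j _ => step j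
      _ = ∑ j ∈ Finset.range n, (if j < k then (1:ℝ) else 0) :=
          Fin.sum_univ_eq_sum_range (fun j => if j < k then (1:ℝ) else 0) n
      _ ≤ (k:ℝ) := by
          rw [Finset.sum_boole]
          have : (Finset.range n).filter (fun j => j < k) ⊆ Finset.range k := by
            intro j hj; simp at hj ⊢; omega
          have := Finset.card_le_card this
          rw [Finset.card_range] at this
          exact_mod_cast this
  -- discrepancy bounds at the grid
  have h1 : ∀ k, k ≤ n → (k : ℝ) / n - y k ≤ D := by
    intro k hk
    rcases eq_or_lt_of_le (hymem k (by omega)).2 with heq | hlt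
    · rw [heq]
      have : (k:ℝ)/n ≤ 1 := by
        rw [div_le_one hnpos]; exact_mod_cast hk
      linarith
    · refine le_of_forall_pos_le_add ?_
      intro ε hε
      set v := min 1 (y k + ε) with hv
      have hvgt : y k < v := lt_min hlt (by linarith)
      have hvmem : v ∈ Set.Icc (0:ℝ) 1 := by
        constructor
        · exact le_min zero_le_one (by have := (hymem k (by omega)).1; linarith)
        · exact min_le_left _ _
      have hcnt := hcount_ge k hk v hvgt
      have habs := hDge v hvmem
      have hkn : (k:ℝ)/n ≤ N v / n := by gcongr
      have habs2 : N v / n - v ≤ |N v / n - v| := le_abs_self _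
      have hvle : v ≤ y k + ε := min_le_right _ _
      linarith
  have h2 : ∀ k, k ≤ n → y (k + 1) - (k : ℝ) / n ≤ D := by
    intro k hk
    have hb : y (k+1) ∈ Set.Icc (0:ℝ) 1 := hymem (k+1) (by omega)
    have hcnt := hcount_le k hk
    have habs := hDge (y (k+1)) hb
    have hkn : N (y (k+1)) / n ≤ (k:ℝ)/n := by gcongr
    have habs2 : -(N (y (k+1)) / n - y (k+1)) ≤ |N (y (k+1)) / n - y (k+1)| := neg_le_abs _
    linarith
  -- Part 1
  have part1 : ∀ f : ℝ → ℝ, (∀ a b, |f a - f b| ≤ M * |a - b|) →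
      |(∫ t in Set.Icc (0 : ℝ) 1, f (G t)) - (∑ i, f (G (u i))) / n| ≤
        M * (eVariationOn G (Set.Icc 0 1)).toReal * D := by
    intro f hf
    set F : ℝ → ℝ := fun t => f (G t) with hFdef
    set K : NNReal := ⟨M, hM.le⟩ with hK
    have hLip : LipschitzWith K f := by
      apply LipschitzWith.of_dist_le_mul
      intro a b
      rw [Real.dist_eq, Real.dist_eq]
      exact hf a b
    have hFvar : eVariationOn F (Set.Icc (0:ℝ) 1) ≤
        (K : ENNReal) * eVariationOn G (Set.Icc (0:ℝ) 1) :=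
      (hLip.lipschitzOnWith (s := Set.univ)).comp_eVariationOn_le (Set.mapsTo_univ G _)
    have hFfin : eVariationOn F (Set.Icc (0:ℝ) 1) ≠ ⊤ :=
      ne_top_of_le_ne_top (ENNReal.mul_ne_top ENNReal.coe_ne_top hG) hFvar
    have hFsubfin : ∀ a b : ℝ, 0 ≤ a → b ≤ 1 →
        eVariationOn F (Set.Icc a b) ≠ ⊤ := fun a b ha hb =>
      ne_top_of_le_ne_top hFfin (eVariationOn.mono F (Set.Icc_subset_Icc ha hb))
    have hintk : ∀ k, k ≤ n → IntervalIntegrable F volume (y k) (y (k + 1)) := by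
      intro k hk
      exact bv_intervalIntegrable (hystep k hk)
        (hFsubfin _ _ (hymem k (by omega)).1 (hymem (k+1) (by omega)).2)
    have hid := koksma_identity F n hn y hy0 hyn1 hintk
    have hsum : (∑ k ∈ Finset.range n, F (y (k + 1))) = ∑ i, f (G (u i)) := by
      have e1 : (∑ k ∈ Finset.range n, F (y (k + 1))) = ∑ j : Fin n, F (y ((j:ℕ) + 1)) :=
        (Fin.sum_univ_eq_sum_range (fun k => F (y (k + 1))) n).symm
      have e2 : (∑ j : Fin n, F (y ((j:ℕ) + 1))) = ∑ j : Fin n, F (x j) := by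
        apply Finset.sum_congr rfl
        intro j _
        congr 1
        rw [hyval ((j:ℕ)+1) (by omega) (by omega)]
        congr 1
      rw [e1, e2, ← hsum_perm (fun t => f (G t))]
    have hInt : (∫ t in Set.Icc (0:ℝ) 1, F t) = ∫ t in (0:ℝ)..1, F t := by
      rw [intervalIntegral.integral_of_le zero_le_one, integral_Icc_eq_integral_Ioc]
    -- variation sum over pieces
    have hVsum : ∀ m, m ≤ n + 1 →
        (∑ k ∈ Finset.range m, eVariationOn F (Set.Icc (y k) (y (k+1)))) =
          eVariationOn F (Set.Icc (y 0) (y m)) := by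
      intro m hm
      induction m with
      | zero =>
        simp only [Finset.range_zero, Finset.sum_empty]
        rw [Set.Icc_self]
        exact (eVariationOn.subsingleton F (Set.subsingleton_singleton)).symm
      | succ m ih =>
        rw [Finset.sum_range_succ, ih (by omega)]
        have h0m : y 0 ≤ y m := by
          rw [hy0]; exact (hymem m (by omega)).1
        have := eVariationOn.Icc_add_Icc F (s := Set.univ) h0m (hystep m (by omega))
          (Set.mem_univ (y m))
        simpa using this
    have hVfin : ∀ k ∈ Finset.range (n+1),
        eVariationOn F (Set.Icc (y k) (y (k+1))) ≠ ⊤ := by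
      intro k hk
      rw [Finset.mem_range] at hk
      exact hFsubfin _ _ (hymem k (by omega)).1 (hymem (k+1) (by omega)).2
    have hVtot : (∑ k ∈ Finset.range (n+1),
        (eVariationOn F (Set.Icc (y k) (y (k+1)))).toReal) =
        (eVariationOn F (Set.Icc (0:ℝ) 1)).toReal := by
      rw [← ENNReal.toReal_sum hVfin, hVsum (n+1) le_rfl, hy0, hyn1]
    have hVF : (eVariationOn F (Set.Icc (0:ℝ) 1)).toReal ≤
        M * (eVariationOn G (Set.Icc (0:ℝ) 1)).toReal := by
      have := ENNReal.toReal_mono (ENNReal.mul_ne_top ENNReal.coe_ne_top hG) hFvar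
      rwa [ENNReal.toReal_mul, ENNReal.coe_toReal] at this
    calc |(∫ t in Set.Icc (0 : ℝ) 1, f (G t)) - (∑ i, f (G (u i))) / n|
        = |(∫ t in (0:ℝ)..1, F t) - (∑ k ∈ Finset.range n, F (y (k + 1))) / n| := by
          rw [← hsum, ← hInt]
      _ = |∑ k ∈ Finset.range (n + 1),
            ((∫ t in y k..y (k + 1), (F t - F (y k))) +
              ((k : ℝ) / n - y (k + 1)) * (F (y (k + 1)) - F (y k)))| := by rw [hid]
      _ ≤ ∑ k ∈ Finset.range (n + 1),
            |(∫ t in y k..y (k + 1), (F t - F (y k))) +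
              ((k : ℝ) / n - y (k + 1)) * (F (y (k + 1)) - F (y k))| :=
          Finset.abs_sum_le_sum_abs _ _
      _ ≤ ∑ k ∈ Finset.range (n + 1),
            D * (eVariationOn F (Set.Icc (y k) (y (k+1)))).toReal := by
          apply Finset.sum_le_sum
          intro k hk
          rw [Finset.mem_range] at hk
          have hkn : k ≤ n := by omega
          exact piece_bound (hystep k hkn) hD0
            (hFsubfin _ _ (hymem k (by omega)).1 (hymem (k+1) (by omega)).2)
            (h1 k hkn) (h2 k hkn)
      _ = D * (eVariationOn F (Set.Icc (0:ℝ) 1)).toReal := by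
          rw [← Finset.mul_sum, hVtot]
      _ ≤ D * (M * (eVariationOn G (Set.Icc (0:ℝ) 1)).toReal) :=
          mul_le_mul_of_nonneg_left hVF hD0
      _ = M * (eVariationOn G (Set.Icc 0 1)).toReal * D := by ring
  refine ⟨part1, ?_⟩
  have hne : Nonempty {f : ℝ → ℝ // ∀ x y, |f x - f y| ≤ M * |x - y|} :=
    ⟨⟨fun _ => 0, fun a b => by simpa using mul_nonneg hM.le (abs_nonneg (a - b))⟩⟩
  exact ciSup_le fun f => part1 f.1 f.2
end

section
/- Let G : [0,1] → ℝ have finite total variation V(G), let M > 0 and c(x,y) = M·|x−y|, and let u_1, …, u_n ∈ [0,1] with star discrepancy D*({u_i}_{i=1}^n). Let P be the pushforward of the uniform distribution on [0,1] under G, Pⁿ = (1/n) Σ_{i=1}^n δ_{G(u_i)}, and let Q be any Borel probability measure on ℝ with finite first moment. Denote by W(μ,ν) = sup_f |∫ f dμ − ∫ f dν| the supremum over all f : ℝ → ℝ with |f(x) − f(y)| ≤ c(x,y) for all x,y (the Wasserstein-1 distance in dual form). Then |W(P, Q) − W(Pⁿ, Q)| ≤ M · V(G) · D*({u_i}_{i=1}^n).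 -/
open MeasureTheory
open scoped ENNReal

/-- The empirical measure `(1/n) ∑ δ_{x i}` of a finite family of points. -/
noncomputable def empirical {E : Type*} [MeasurableSpace E] {n : ℕ} (x : Fin n → E) :
    Measure E :=
  (n : ℝ≥0∞)⁻¹ • ∑ i, Measure.dirac (x i)

section Aux
variable {n : ℕ}

private lemma integrable_dirac'' (f : ℝ → ℝ) (a : ℝ) : Integrable f (Measure.dirac a) :=
  (integrable_const (f a)).congr (ae_eq_dirac f).symm

private lemma integrable_empirical (hn : 0 < n) (x : Fin n → ℝ) (f : ℝ → ℝ) :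
    Integrable f (empirical x) := by
  unfold empirical
  refine Integrable.smul_measure ?_ (ENNReal.inv_ne_top.2 (by exact_mod_cast hn.ne'))
  exact integrable_finset_sum_measure.2 fun i _ => integrable_dirac'' f (x i)

private lemma integral_empirical (x : Fin n → ℝ) (f : ℝ → ℝ) :
    ∫ y, f y ∂(empirical x) = (∑ i, f (x i)) / n := by
  unfold empirical
  rw [integral_smul_measure,
    integral_finset_sum_measure (fun i _ => integrable_dirac'' f (x i))]
  simp [integral_dirac, ENNReal.toReal_inv, div_eq_inv_mul]

private lemma isProbabilityMeasure_empirical (hn : 0 < n) (x : Fin n → ℝ) :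
    IsProbabilityMeasure (empirical x) := by
  constructor
  unfold empirical
  rw [Measure.smul_apply, Measure.finset_sum_apply]
  simp only [measure_univ, Finset.sum_const, Finset.card_univ, Fintype.card_fin, nsmul_eq_mul,
    mul_one, smul_eq_mul]
  exact ENNReal.inv_mul_cancel (by exact_mod_cast hn.ne') (ENNReal.natCast_ne_top n)

open Classical in
private lemma empirical_toReal (x : Fin n → ℝ) {s : Set ℝ} (hs : MeasurableSet s) :
    ((empirical x) s).toReal = (∑ i, if x i ∈ s then (1 : ℝ) else 0) / n := by
  unfold empirical
  rw [Measure.smul_apply, Measure.finset_sum_apply, smul_eq_mul, ENNReal.toReal_mul,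
    ENNReal.toReal_inv, ENNReal.toReal_natCast,
    ENNReal.toReal_sum (fun i _ => by
      rw [Measure.dirac_apply' _ hs, Set.indicator_apply]
      split <;> simp)]
  rw [div_eq_inv_mul]
  congr 1
  refine Finset.sum_congr rfl fun i _ => ?_
  rw [Measure.dirac_apply' _ hs, Set.indicator_apply]
  split <;> simp

private lemma empirical_null (x : Fin n → ℝ) {s : Set ℝ} (hs : MeasurableSet s)
    (hx : ∀ i, x i ∉ s) : (empirical x) s = 0 := by
  classical
  unfold empirical
  rw [Measure.smul_apply, Measure.finset_sum_apply, smul_eq_mul]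
  have : ∀ i ∈ Finset.univ, Measure.dirac (x i) s = 0 := fun i _ => by
    rw [Measure.dirac_apply' _ hs, Set.indicator_apply, if_neg (hx i)]
  rw [Finset.sum_eq_zero this, mul_zero]

private lemma starDisc_bdd (hn : 0 < n) (u : Fin n → ℝ) :
    BddAbove (Set.range fun v : Set.Icc (0 : ℝ) 1 =>
      |(∑ i, if u i ∈ Set.Ico (0 : ℝ) (v : ℝ) then (1 : ℝ) else 0) / n - (v : ℝ)|) := by
  refine ⟨1, ?_⟩
  rintro _ ⟨v, rfl⟩
  have hn' : (0 : ℝ) < n := by exact_mod_cast hn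
  have h0 : (0 : ℝ) ≤ ∑ i, if u i ∈ Set.Ico (0 : ℝ) (v : ℝ) then (1 : ℝ) else 0 :=
    Finset.sum_nonneg fun i _ => by positivity
  have h1 : (∑ i, if u i ∈ Set.Ico (0 : ℝ) (v : ℝ) then (1 : ℝ) else 0) ≤ n := by
    calc (∑ i, if u i ∈ Set.Ico (0 : ℝ) (v : ℝ) then (1 : ℝ) else 0)
        ≤ ∑ _i : Fin n, (1 : ℝ) := Finset.sum_le_sum fun i _ => by split <;> norm_num
      _ = n := by simp
  have hv0 := v.2.1
  have hv1 := v.2.2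
  have hd0 : (0 : ℝ) ≤ (∑ i, if u i ∈ Set.Ico (0 : ℝ) (v : ℝ) then (1 : ℝ) else 0) / n :=
    div_nonneg h0 hn'.le
  have hd1 : (∑ i, if u i ∈ Set.Ico (0 : ℝ) (v : ℝ) then (1 : ℝ) else 0) / n ≤ 1 :=
    (div_le_one hn').2 h1
  rw [abs_le]
  constructor <;> linarith

private lemma abs_le_starDisc (hn : 0 < n) (u : Fin n → ℝ) {v : ℝ}
    (hv : v ∈ Set.Icc (0 : ℝ) 1) :
    |(∑ i, if u i ∈ Set.Ico (0 : ℝ) v then (1 : ℝ) else 0) / n - v| ≤ starDisc u :=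
  le_ciSup (starDisc_bdd hn u) (⟨v, hv⟩ : Set.Icc (0 : ℝ) 1)

private lemma starDisc_nonneg (hn : 0 < n) (u : Fin n → ℝ) : 0 ≤ starDisc u := by
  have := abs_le_starDisc hn u (v := 0) ⟨le_rfl, zero_le_one⟩
  simpa using this

end Aux

section Count
variable {n : ℕ}

private lemma count_Icc_le (hn : 0 < n) (u : Fin n → ℝ) (hu : ∀ i, u i ∈ Set.Icc (0 : ℝ) 1)
    {c : ℝ} (hc0 : 0 ≤ c) (hc1 : c ≤ 1) :
    (∑ i, if u i ∈ Set.Icc (0 : ℝ) c then (1 : ℝ) else 0) / n ≤ c + starDisc u := by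
  classical
  have hn' : (0 : ℝ) < n := by exact_mod_cast hn
  rcases eq_or_lt_of_le hc1 with rfl | hlt
  · have h1 : (∑ i, if u i ∈ Set.Icc (0 : ℝ) 1 then (1 : ℝ) else 0) ≤ n := by
      calc (∑ i, if u i ∈ Set.Icc (0 : ℝ) 1 then (1 : ℝ) else 0)
          ≤ ∑ _i : Fin n, (1 : ℝ) := Finset.sum_le_sum fun i _ => by split <;> norm_num
        _ = n := by simp
    have h2 : (∑ i, if u i ∈ Set.Icc (0 : ℝ) 1 then (1 : ℝ) else 0) / n ≤ 1 :=
      (div_le_one hn').2 h1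
    linarith [starDisc_nonneg hn u]
  · by_contra hcon
    push_neg at hcon
    set ε : ℝ := ((∑ i, if u i ∈ Set.Icc (0 : ℝ) c then (1 : ℝ) else 0) / n
      - (c + starDisc u)) / 2 with hε
    have hε0 : 0 < ε := by simp only [hε]; linarith
    -- choose v slightly to the right of c avoiding all points above c
    set T : Finset (Fin n) := Finset.univ.filter (fun i => c < u i) with hT
    set v' : ℝ := if hTne : T.Nonempty then T.inf' hTne u else 1 with hv'
    have hv'le1 : v' ≤ 1 := by
      rw [hv']
      split
      · next hTne =>
        obtain ⟨i0, hi0⟩ := hTne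
        exact le_trans (Finset.inf'_le u hi0) (hu i0).2
      · exact le_rfl
    have hcv' : c < v' := by
      rw [hv']
      split
      · next hTne =>
        rw [Finset.lt_inf'_iff]
        intro i hi
        exact (Finset.mem_filter.1 hi).2
      · exact hlt
    set v : ℝ := min (c + ε) v' with hv
    have hvc : c < v := lt_min (by linarith) hcv'
    have hv1 : v ≤ 1 := le_trans (min_le_right _ _) hv'le1
    have hv0 : 0 ≤ v := le_trans hc0 hvc.le
    have hmono : (∑ i, if u i ∈ Set.Icc (0 : ℝ) c then (1 : ℝ) else 0)
        ≤ ∑ i, if u i ∈ Set.Ico (0 : ℝ) v then (1 : ℝ) else 0 := by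
      refine Finset.sum_le_sum fun i _ => ?_
      by_cases hi : u i ∈ Set.Icc (0 : ℝ) c
      · rw [if_pos hi, if_pos ⟨hi.1, lt_of_le_of_lt hi.2 hvc⟩]
      · rw [if_neg hi]; split <;> norm_num
    have habs := abs_le_starDisc hn u (v := v) ⟨hv0, hv1⟩
    rw [abs_le] at habs
    have hvle : v ≤ c + ε := min_le_left _ _
    have hdiv : (∑ i, if u i ∈ Set.Icc (0 : ℝ) c then (1 : ℝ) else 0) / n
        ≤ (∑ i, if u i ∈ Set.Ico (0 : ℝ) v then (1 : ℝ) else 0) / n := by gcongr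
    linarith
end Count

section MeasDiff
variable {n : ℕ}

private lemma meas_diff_le (hn : 0 < n) (u : Fin n → ℝ) (hu : ∀ i, u i ∈ Set.Icc (0 : ℝ) 1)
    {g : ℝ → ℝ} (hg : Monotone g) (y : ℝ) :
    |((empirical u) {a : ℝ | y < g a}).toReal
      - ((volume.restrict (Set.Icc (0 : ℝ) 1)) {a : ℝ | y < g a}).toReal| ≤ starDisc u := by
  classical
  have hn' : (0 : ℝ) < n := by exact_mod_cast hn
  have hsm : MeasurableSet {a : ℝ | y < g a} := hg.measurable measurableSet_Ioi
  set S : Set ℝ := {a : ℝ | y < g a} ∩ Set.Icc (0 : ℝ) 1 with hS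
  have hL : ((volume.restrict (Set.Icc (0 : ℝ) 1)) {a : ℝ | y < g a}).toReal
      = (volume S).toReal := by rw [Measure.restrict_apply hsm]
  have hA : ((empirical u) {a : ℝ | y < g a}).toReal
      = (∑ i, if y < g (u i) then (1 : ℝ) else 0) / n := by
    rw [empirical_toReal u hsm]
    congr 1
  by_cases hSne : S.Nonempty
  · set c : ℝ := sInf S with hc
    have hbdd : BddBelow S := ⟨0, fun x hx => hx.2.1⟩
    have hc0 : 0 ≤ c := le_csInf hSne fun x hx => hx.2.1
    obtain ⟨a0, ha0⟩ := hSne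
    have hc1 : c ≤ 1 := le_trans (csInf_le hbdd ha0) ha0.2.2
    have hup : Set.Ioc c 1 ⊆ S := by
      intro b hb
      obtain ⟨a, haS, hab⟩ := exists_lt_of_csInf_lt ⟨a0, ha0⟩ hb.1
      exact ⟨lt_of_lt_of_le haS.1 (hg hab.le), ⟨le_trans hc0 hb.1.le, hb.2⟩⟩
    have hlow : S ⊆ Set.Icc c 1 := fun x hx => ⟨csInf_le hbdd hx, hx.2.2⟩
    have hvol : volume S = ENNReal.ofReal (1 - c) := by
      refine le_antisymm ?_ ?_
      · calc volume S ≤ volume (Set.Icc c 1) := measure_mono hlow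
          _ = ENNReal.ofReal (1 - c) := Real.volume_Icc
      · calc ENNReal.ofReal (1 - c) = volume (Set.Ioc c 1) := Real.volume_Ioc.symm
          _ ≤ volume S := measure_mono hup
    have hLval : ((volume.restrict (Set.Icc (0 : ℝ) 1)) {a : ℝ | y < g a}).toReal = 1 - c := by
      rw [hL, hvol, ENNReal.toReal_ofReal (by linarith)]
    -- counting bounds
    have hmemS : ∀ i, y < g (u i) → u i ∈ S := fun i hi => ⟨hi, hu i⟩
    have hNup : (∑ i, if y < g (u i) then (1 : ℝ) else 0)
        + (∑ i, if u i ∈ Set.Ico (0 : ℝ) c then (1 : ℝ) else 0) ≤ n := by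
      have : ∀ i ∈ Finset.univ, (if y < g (u i) then (1 : ℝ) else 0)
          + (if u i ∈ Set.Ico (0 : ℝ) c then (1 : ℝ) else 0) ≤ 1 := by
        intro i _
        by_cases h1 : y < g (u i)
        · have : u i ∉ Set.Ico (0 : ℝ) c := fun hmem => absurd (csInf_le hbdd (hmemS i h1))
            (not_le.2 hmem.2)
          rw [if_pos h1, if_neg this]; norm_num
        · rw [if_neg h1]; split <;> norm_num
      calc (∑ i, if y < g (u i) then (1 : ℝ) else 0)
            + (∑ i, if u i ∈ Set.Ico (0 : ℝ) c then (1 : ℝ) else 0)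
          = ∑ i, ((if y < g (u i) then (1 : ℝ) else 0)
            + (if u i ∈ Set.Ico (0 : ℝ) c then (1 : ℝ) else 0)) := (Finset.sum_add_distrib).symm
        _ ≤ ∑ _i : Fin n, (1 : ℝ) := Finset.sum_le_sum this
        _ = n := by simp
    have hNlow : (n : ℝ) ≤ (∑ i, if y < g (u i) then (1 : ℝ) else 0)
        + (∑ i, if u i ∈ Set.Icc (0 : ℝ) c then (1 : ℝ) else 0) := by
      have : ∀ i ∈ Finset.univ, (1 : ℝ) ≤ (if y < g (u i) then (1 : ℝ) else 0)
          + (if u i ∈ Set.Icc (0 : ℝ) c then (1 : ℝ) else 0) := by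
        intro i _
        by_cases h1 : u i ≤ c
        · rw [if_pos (Set.mem_Icc.2 ⟨(hu i).1, h1⟩)]
          split <;> norm_num
        · push_neg at h1
          have : u i ∈ S := hup (Set.mem_Ioc.2 ⟨h1, (hu i).2⟩)
          rw [if_pos (show y < g (u i) from this.1)]
          split <;> norm_num
      calc (n : ℝ) = ∑ _i : Fin n, (1 : ℝ) := by simp
        _ ≤ ∑ i, ((if y < g (u i) then (1 : ℝ) else 0)
            + (if u i ∈ Set.Icc (0 : ℝ) c then (1 : ℝ) else 0)) := Finset.sum_le_sum this
        _ = _ := Finset.sum_add_distrib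
    have habs := abs_le_starDisc hn u (v := c) ⟨hc0, hc1⟩
    rw [abs_le] at habs
    have hK := count_Icc_le hn u hu hc0 hc1
    rw [hA, hLval, abs_le]
    constructor
    · -- lower bound via hNlow and hK
      have h1 : ((n : ℝ) - ∑ i, if u i ∈ Set.Icc (0 : ℝ) c then (1 : ℝ) else 0) / n
          ≤ (∑ i, if y < g (u i) then (1 : ℝ) else 0) / n := by gcongr <;> linarith
      have h2 : ((n : ℝ) - ∑ i, if u i ∈ Set.Icc (0 : ℝ) c then (1 : ℝ) else 0) / n
          = 1 - (∑ i, if u i ∈ Set.Icc (0 : ℝ) c then (1 : ℝ) else 0) / n := by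
        rw [sub_div, div_self hn'.ne']
      linarith
    · have h1 : (∑ i, if y < g (u i) then (1 : ℝ) else 0) / n
          ≤ ((n : ℝ) - ∑ i, if u i ∈ Set.Ico (0 : ℝ) c then (1 : ℝ) else 0) / n := by
        gcongr <;> linarith
      have h2 : ((n : ℝ) - ∑ i, if u i ∈ Set.Ico (0 : ℝ) c then (1 : ℝ) else 0) / n
          = 1 - (∑ i, if u i ∈ Set.Ico (0 : ℝ) c then (1 : ℝ) else 0) / n := by
        rw [sub_div, div_self hn'.ne']
      linarith [habs.1, habs.2]
  · -- S empty
    rw [Set.not_nonempty_iff_eq_empty] at hSne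
    have hvol : (volume S).toReal = 0 := by rw [hSne]; simp
    have hcnt : ∀ i, ¬ y < g (u i) := by
      intro i hi
      have hmem : u i ∈ S := ⟨hi, hu i⟩
      rw [hSne] at hmem
      exact hmem
    have : (∑ i, if y < g (u i) then (1 : ℝ) else 0) = 0 :=
      Finset.sum_eq_zero fun i _ => if_neg (hcnt i)
    rw [hA, hL, hvol, this]
    simpa using starDisc_nonneg hn u

end MeasDiff

section KoksmaMono
variable {n : ℕ}

private lemma koksma_mono (hn : 0 < n) (u : Fin n → ℝ) (hu : ∀ i, u i ∈ Set.Icc (0 : ℝ) 1)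
    {h : ℝ → ℝ} (hm : Monotone h) :
    |(∑ i, h (u i)) / n - ∫ t in Set.Icc (0 : ℝ) 1, h t| ≤ (h 1 - h 0) * starDisc u := by
  classical
  have hn' : (0 : ℝ) < n := by exact_mod_cast hn
  have h01 : h 0 ≤ h 1 := hm zero_le_one
  set μ : Measure ℝ := volume.restrict (Set.Icc (0 : ℝ) 1) with hμdef
  have hμuniv : μ Set.univ = 1 := by
    rw [hμdef, Measure.restrict_apply_univ, Real.volume_Icc]
    norm_num
  haveI : IsProbabilityMeasure μ := ⟨hμuniv⟩
  haveI hPemp : IsProbabilityMeasure (empirical u) := isProbabilityMeasure_empirical hn u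
  set g : ℝ → ℝ := fun t => h t - h 0 with hgdef
  have hgm : Monotone g := fun a b hab => sub_le_sub_right (hm hab) _
  have hcompl : (empirical u) (Set.Icc (0 : ℝ) 1)ᶜ = 0 :=
    empirical_null u measurableSet_Icc.compl fun i hi => hi (hu i)
  -- integrability
  have hint_h : IntegrableOn h (Set.Icc (0 : ℝ) 1) volume :=
    (hm.monotoneOn _).integrableOn_isCompact isCompact_Icc
  have hint_g : Integrable g μ := by
    have : Integrable (fun _ : ℝ => h 0) μ := integrable_const _
    exact hint_h.sub this
  have hint_gν : Integrable g (empirical u) := integrable_empirical hn u g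
  have hg_nn_μ : 0 ≤ᵐ[μ] g := by
    rw [hμdef]
    refine (ae_restrict_iff' measurableSet_Icc).2 (ae_of_all _ fun t ht => ?_)
    exact sub_nonneg.2 (hm ht.1)
  have hg_nn_ν : 0 ≤ᵐ[empirical u] g := by
    refine (ae_iff).2 ?_
    refine measure_mono_null (fun a ha => ?_) hcompl
    intro haI
    have hlt : g a < 0 := by simpa using ha
    exact absurd hlt (not_lt.2 (sub_nonneg.2 (hm haI.1)))
  have E1 := hint_gν.integral_eq_integral_meas_lt hg_nn_ν
  have E2 := hint_g.integral_eq_integral_meas_lt hg_nn_μ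
  -- left-hand sides
  have L1 : ∫ x, g x ∂(empirical u) = (∑ i, h (u i)) / n - h 0 := by
    rw [integral_empirical]
    rw [hgdef]
    simp only []
    rw [Finset.sum_sub_distrib, Finset.sum_const, Finset.card_univ, Fintype.card_fin,
      nsmul_eq_mul, sub_div, mul_div_cancel_left₀ _ hn'.ne']
  have L2 : ∫ x, g x ∂μ = (∫ t in Set.Icc (0 : ℝ) 1, h t) - h 0 := by
    have : ∫ x, g x ∂μ = (∫ x, h x ∂μ) - ∫ _x, h 0 ∂μ := integral_sub hint_h (integrable_const _)
    rw [this, integral_const, probReal_univ]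
    simp
    rfl
  -- the two tail functions
  set A : ℝ → ℝ := fun t => ((empirical u) {a : ℝ | t < g a}).toReal with hAdef
  set L : ℝ → ℝ := fun t => (μ {a : ℝ | t < g a}).toReal with hLdef
  have hAanti : Antitone A := fun s t hst =>
    ENNReal.toReal_mono (measure_ne_top _ _)
      (measure_mono fun a ha => lt_of_le_of_lt hst ha)
  have hLanti : Antitone L := fun s t hst =>
    ENNReal.toReal_mono (measure_ne_top _ _)
      (measure_mono fun a ha => lt_of_le_of_lt hst ha)
  have hA0 : ∀ t, h 1 - h 0 < t → A t = 0 := by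
    intro t ht
    have : (empirical u) {a : ℝ | t < g a} = 0 := by
      refine measure_mono_null (fun a ha => ?_) hcompl
      intro haI
      have : g a ≤ h 1 - h 0 := sub_le_sub_right (hm haI.2) _
      exact absurd ha (not_lt.2 (this.trans ht.le))
    rw [hAdef]; simp only []; rw [this]; simp
  have hL0 : ∀ t, h 1 - h 0 < t → L t = 0 := by
    intro t ht
    have hsm : MeasurableSet {a : ℝ | t < g a} := hgm.measurable measurableSet_Ioi
    have : {a : ℝ | t < g a} ∩ Set.Icc (0 : ℝ) 1 = ∅ := by
      refine Set.eq_empty_iff_forall_notMem.2 fun a ha => ?_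
      have : g a ≤ h 1 - h 0 := sub_le_sub_right (hm ha.2.2) _
      exact absurd ha.1 (not_lt.2 (this.trans ht.le))
    rw [hLdef]; simp only []
    rw [hμdef, Measure.restrict_apply hsm, this]
    simp
  have hA1 : ∀ t, A t ≤ 1 := fun t => by
    rw [hAdef]; simp only []
    calc ((empirical u) _).toReal ≤ ((empirical u) Set.univ).toReal :=
        ENNReal.toReal_mono (measure_ne_top _ _) (measure_mono (Set.subset_univ _))
      _ = 1 := by rw [measure_univ]; simp
  have hL1 : ∀ t, L t ≤ 1 := fun t => by
    rw [hLdef]; simp only []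
    calc (μ _).toReal ≤ (μ Set.univ).toReal :=
        ENNReal.toReal_mono (measure_ne_top _ _) (measure_mono (Set.subset_univ _))
      _ = 1 := by rw [hμuniv]; simp
  -- bound function
  set B : ℝ → ℝ := (Set.Ioc (0 : ℝ) (h 1 - h 0)).indicator (fun _ => (1 : ℝ)) with hBdef
  have hBint : IntegrableOn B (Set.Ioi (0 : ℝ)) volume := by
    rw [hBdef, IntegrableOn, integrable_indicator_iff measurableSet_Ioc]
    refine integrableOn_const (ne_of_lt ?_)
    calc (volume.restrict (Set.Ioi (0:ℝ))) (Set.Ioc (0:ℝ) (h 1 - h 0))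
        ≤ volume (Set.Ioc (0:ℝ) (h 1 - h 0)) := Measure.restrict_apply_le _ _
      _ < ⊤ := by rw [Real.volume_Ioc]; exact ENNReal.ofReal_lt_top
  have hBnn : ∀ t, 0 ≤ B t := fun t => Set.indicator_nonneg (fun _ _ => zero_le_one) t
  have habsA : ∀ t ∈ Set.Ioi (0:ℝ), ‖A t‖ ≤ B t := by
    intro t ht
    rw [Real.norm_eq_abs, abs_of_nonneg (show (0:ℝ) ≤ A t from ENNReal.toReal_nonneg)]
    by_cases hle : t ≤ h 1 - h 0
    · rw [hBdef, Set.indicator_of_mem (Set.mem_Ioc.2 ⟨Set.mem_Ioi.1 ht, hle⟩)]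
      exact hA1 t
    · rw [hA0 t (not_le.1 hle)]
      exact hBnn t
  have habsL : ∀ t ∈ Set.Ioi (0:ℝ), ‖L t‖ ≤ B t := by
    intro t ht
    rw [Real.norm_eq_abs, abs_of_nonneg (show (0:ℝ) ≤ L t from ENNReal.toReal_nonneg)]
    by_cases hle : t ≤ h 1 - h 0
    · rw [hBdef, Set.indicator_of_mem (Set.mem_Ioc.2 ⟨Set.mem_Ioi.1 ht, hle⟩)]
      exact hL1 t
    · rw [hL0 t (not_le.1 hle)]
      exact hBnn t
  have hAint : IntegrableOn A (Set.Ioi (0:ℝ)) volume := by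
    refine Integrable.mono' hBint hAanti.measurable.aestronglyMeasurable ?_
    exact (ae_restrict_iff' measurableSet_Ioi).2 (ae_of_all _ habsA)
  have hLint : IntegrableOn L (Set.Ioi (0:ℝ)) volume := by
    refine Integrable.mono' hBint hLanti.measurable.aestronglyMeasurable ?_
    exact (ae_restrict_iff' measurableSet_Ioi).2 (ae_of_all _ habsL)
  -- main difference identity
  have key : (∑ i, h (u i)) / n - ∫ t in Set.Icc (0 : ℝ) 1, h t
      = (∫ t in Set.Ioi (0:ℝ), A t) - ∫ t in Set.Ioi (0:ℝ), L t := by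
    have e1 : ∫ t in Set.Ioi (0:ℝ), A t = (∑ i, h (u i)) / n - h 0 := by rw [← L1, E1]; rfl
    have e2 : ∫ t in Set.Ioi (0:ℝ), L t = (∫ t in Set.Icc (0 : ℝ) 1, h t) - h 0 := by
      rw [← L2, E2]; rfl
    rw [e1, e2]; ring
  rw [key]
  -- final estimate
  have hD := starDisc_nonneg hn u
  have hptwise : ∀ t ∈ Set.Ioi (0:ℝ), |A t - L t| ≤ starDisc u * B t := by
    intro t ht
    by_cases hle : t ≤ h 1 - h 0
    · rw [hBdef, Set.indicator_of_mem (Set.mem_Ioc.2 ⟨Set.mem_Ioi.1 ht, hle⟩), mul_one]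
      exact meas_diff_le hn u hu hgm t
    · rw [hA0 t (not_le.1 hle), hL0 t (not_le.1 hle), hBdef,
        Set.indicator_of_notMem (fun hmem => hle hmem.2), mul_zero]
      simp
  calc |(∫ t in Set.Ioi (0:ℝ), A t) - ∫ t in Set.Ioi (0:ℝ), L t|
      = |∫ t in Set.Ioi (0:ℝ), (A t - L t)| := by rw [integral_sub hAint hLint]
    _ ≤ ∫ t in Set.Ioi (0:ℝ), |A t - L t| := by
        simpa [Real.norm_eq_abs] using
          norm_integral_le_integral_norm (μ := volume.restrict (Set.Ioi (0:ℝ)))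
            (fun t => A t - L t)
    _ ≤ ∫ t in Set.Ioi (0:ℝ), starDisc u * B t := by
        refine integral_mono_ae ((hAint.sub hLint).abs) (hBint.const_mul _) ?_
        exact (ae_restrict_iff' measurableSet_Ioi).2 (ae_of_all _ hptwise)
    _ = starDisc u * ∫ t in Set.Ioi (0:ℝ), B t := integral_const_mul _ _
    _ = starDisc u * (h 1 - h 0) := by
        rw [hBdef, integral_indicator_const (1:ℝ) measurableSet_Ioc, measureReal_def,
          Measure.restrict_apply measurableSet_Ioc,
          Set.inter_eq_self_of_subset_left Set.Ioc_subset_Ioi_self, Real.volume_Ioc,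
          ENNReal.toReal_ofReal (by linarith), smul_eq_mul, mul_one, mul_comm]
        ring
    _ = (h 1 - h 0) * starDisc u := mul_comm _ _

section Koksma
variable {n : ℕ}

private lemma koksma (hn : 0 < n) (u : Fin n → ℝ) (hu : ∀ i, u i ∈ Set.Icc (0 : ℝ) 1)
    {h : ℝ → ℝ} (hh : eVariationOn h (Set.Icc 0 1) ≠ ⊤) :
    |(∑ i, h (u i)) / n - ∫ t in Set.Icc (0 : ℝ) 1, h t|
      ≤ (eVariationOn h (Set.Icc 0 1)).toReal * starDisc u := by
  classical
  have hbv : LocallyBoundedVariationOn h (Set.Icc (0:ℝ) 1) :=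
    BoundedVariationOn.locallyBoundedVariationOn hh
  set cl : ℝ → ℝ := fun t => max 0 (min 1 t) with hcl
  have hclm : Monotone cl := fun a b hab =>
    max_le_max le_rfl (min_le_min le_rfl hab)
  have hclI : ∀ t, cl t ∈ Set.Icc (0:ℝ) 1 :=
    fun t => ⟨le_max_left _ _, max_le zero_le_one (min_le_left _ _)⟩
  have hclid : ∀ t ∈ Set.Icc (0:ℝ) 1, cl t = t := fun t ht => by
    rw [hcl]; simp only []
    rw [min_eq_right ht.2, max_eq_right ht.1]
  have hcl0 : cl 0 = 0 := hclid 0 ⟨le_rfl, zero_le_one⟩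
  have hcl1 : cl 1 = 1 := hclid 1 ⟨zero_le_one, le_rfl⟩
  have h0mem : (0:ℝ) ∈ Set.Icc (0:ℝ) 1 := ⟨le_rfl, zero_le_one⟩
  set V : ℝ → ℝ := fun t => variationOnFromTo h (Set.Icc (0:ℝ) 1) 0 (cl t) with hV
  have key : ∀ {s t : ℝ}, s ≤ t → |h (cl t) - h (cl s)| ≤ V t - V s := by
    intro s t hst
    have h1 : V s + variationOnFromTo h (Set.Icc (0:ℝ) 1) (cl s) (cl t) = V t :=
      variationOnFromTo.add hbv h0mem (hclI s) (hclI t)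
    have h2 : variationOnFromTo h (Set.Icc (0:ℝ) 1) (cl s) (cl t)
        = (eVariationOn h (Set.Icc (0:ℝ) 1 ∩ Set.Icc (cl s) (cl t))).toReal :=
      variationOnFromTo.eq_of_le _ _ (hclm hst)
    have h3 : edist (h (cl t)) (h (cl s))
        ≤ eVariationOn h (Set.Icc (0:ℝ) 1 ∩ Set.Icc (cl s) (cl t)) :=
      eVariationOn.edist_le h ⟨hclI t, ⟨hclm hst, le_rfl⟩⟩ ⟨hclI s, ⟨le_rfl, hclm hst⟩⟩
    have h4 : eVariationOn h (Set.Icc (0:ℝ) 1 ∩ Set.Icc (cl s) (cl t)) ≠ ⊤ :=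
      ne_top_of_le_ne_top hh (eVariationOn.mono h Set.inter_subset_left)
    calc |h (cl t) - h (cl s)| = dist (h (cl t)) (h (cl s)) := (Real.dist_eq _ _).symm
      _ = (edist (h (cl t)) (h (cl s))).toReal := by
          rw [edist_dist, ENNReal.toReal_ofReal dist_nonneg]
      _ ≤ (eVariationOn h (Set.Icc (0:ℝ) 1 ∩ Set.Icc (cl s) (cl t))).toReal :=
          ENNReal.toReal_mono h4 h3
      _ = V t - V s := by rw [← h2]; linarith
  set p : ℝ → ℝ := fun t => (V t + h (cl t)) / 2 with hp
  set q : ℝ → ℝ := fun t => (V t - h (cl t)) / 2 with hq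
  have hpm : Monotone p := by
    intro s t hst
    have := key hst
    have h1 := neg_abs_le (h (cl t) - h (cl s))
    rw [hp]; simp only []
    linarith
  have hqm : Monotone q := by
    intro s t hst
    have := key hst
    have h1 := le_abs_self (h (cl t) - h (cl s))
    rw [hq]; simp only []
    linarith
  have hpq : ∀ t ∈ Set.Icc (0:ℝ) 1, h t = p t - q t := by
    intro t ht
    rw [hp, hq]; simp only []
    rw [hclid t ht]; ring
  -- integrals
  have hip : IntegrableOn p (Set.Icc (0:ℝ) 1) volume :=
    (hpm.monotoneOn _).integrableOn_isCompact isCompact_Icc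
  have hiq : IntegrableOn q (Set.Icc (0:ℝ) 1) volume :=
    (hqm.monotoneOn _).integrableOn_isCompact isCompact_Icc
  have hIsplit : ∫ t in Set.Icc (0:ℝ) 1, h t
      = (∫ t in Set.Icc (0:ℝ) 1, p t) - ∫ t in Set.Icc (0:ℝ) 1, q t := by
    rw [← integral_sub hip hiq]
    exact setIntegral_congr_fun measurableSet_Icc fun t ht => hpq t ht
  have hSsplit : (∑ i, h (u i)) / n
      = (∑ i, p (u i)) / n - (∑ i, q (u i)) / n := by
    rw [← sub_div, ← Finset.sum_sub_distrib]
    congr 1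
    exact Finset.sum_congr rfl fun i _ => hpq (u i) (hu i)
  have Hp := koksma_mono hn u hu hpm
  have Hq := koksma_mono hn u hu hqm
  -- variation value
  have hV0 : V 0 = 0 := by rw [hV]; simp only []; rw [hcl0, variationOnFromTo.self]
  have hV1 : V 1 = (eVariationOn h (Set.Icc (0:ℝ) 1)).toReal := by
    rw [hV]; simp only []; rw [hcl1, variationOnFromTo.eq_of_le _ _ zero_le_one]
    congr 1
    rw [Set.inter_eq_self_of_subset_left (by intro x hx; exact hx : Set.Icc (0:ℝ) 1 ⊆ Set.Icc 0 1)]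
  have hsum : (p 1 - p 0) + (q 1 - q 0) = (eVariationOn h (Set.Icc (0:ℝ) 1)).toReal := by
    rw [hp, hq]; simp only []
    rw [← hV1]
    have := hV0
    linarith
  calc |(∑ i, h (u i)) / n - ∫ t in Set.Icc (0 : ℝ) 1, h t|
      = |((∑ i, p (u i)) / n - ∫ t in Set.Icc (0:ℝ) 1, p t)
          - ((∑ i, q (u i)) / n - ∫ t in Set.Icc (0:ℝ) 1, q t)| := by
        rw [hSsplit, hIsplit]; congr 1; ring
    _ ≤ |(∑ i, p (u i)) / n - ∫ t in Set.Icc (0:ℝ) 1, p t|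
          + |(∑ i, q (u i)) / n - ∫ t in Set.Icc (0:ℝ) 1, q t| := abs_sub _ _
    _ ≤ (p 1 - p 0) * starDisc u + (q 1 - q 0) * starDisc u := add_le_add Hp Hq
    _ = (eVariationOn h (Set.Icc 0 1)).toReal * starDisc u := by
        rw [← add_mul, hsum]

end Koksma

section Dual

private lemma ciSup_abs_sub {ι : Sort*} [Nonempty ι] {a b : ι → ℝ} {c : ℝ}
    (ha : BddAbove (Set.range a)) (hb : BddAbove (Set.range b))
    (hab : ∀ i, |a i - b i| ≤ c) : |(⨆ i, a i) - ⨆ i, b i| ≤ c := by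
  rw [abs_sub_le_iff]
  constructor
  · rw [sub_le_iff_le_add]
    refine ciSup_le fun i => ?_
    have h1 : a i - b i ≤ c := le_trans (le_abs_self _) (hab i)
    have h2 : b i ≤ ⨆ j, b j := le_ciSup hb i
    linarith
  · rw [sub_le_iff_le_add]
    refine ciSup_le fun i => ?_
    have h1 : b i - a i ≤ c := le_trans (le_abs_self _) (by rw [abs_sub_comm]; exact hab i)
    have h2 : a i ≤ ⨆ j, a j := le_ciSup ha i
    linarith

private lemma lip_continuous {M : ℝ} (hM : 0 < M) {f : ℝ → ℝ}
    (hf : ∀ x y, |f x - f y| ≤ M * |x - y|) : Continuous f := by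
  have : LipschitzWith (Real.toNNReal M) f := by
    rw [lipschitzWith_iff_dist_le_mul]
    intro x y
    rw [Real.dist_eq, Real.dist_eq, Real.coe_toNNReal M hM.le]
    exact hf x y
  exact this.continuous

private lemma lip_integrable {M : ℝ} (hM : 0 < M) {f : ℝ → ℝ}
    (hf : ∀ x y, |f x - f y| ≤ M * |x - y|) (κ : Measure ℝ)
    (hκ : Integrable (fun x : ℝ => |x|) κ) :
    Integrable (fun x => f x - f 0) κ ∧
      |∫ x, (f x - f 0) ∂κ| ≤ M * ∫ x, |x| ∂κ := by
  have hfc : Continuous f := lip_continuous hM hf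
  have hbd : ∀ x : ℝ, ‖f x - f 0‖ ≤ M * |x| := fun x => by
    rw [Real.norm_eq_abs]
    simpa using hf x 0
  have hint : Integrable (fun x => f x - f 0) κ := by
    refine Integrable.mono' (hκ.const_mul M)
      ((hfc.sub continuous_const).aestronglyMeasurable) (ae_of_all _ hbd)
  refine ⟨hint, ?_⟩
  calc |∫ x, (f x - f 0) ∂κ| ≤ ∫ x, |f x - f 0| ∂κ := by
        simpa [Real.norm_eq_abs] using
          norm_integral_le_integral_norm (μ := κ) (fun x => f x - f 0)
    _ ≤ ∫ x, M * |x| ∂κ := by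
        refine integral_mono hint.abs (hκ.const_mul M) fun x => ?_
        simpa [Real.norm_eq_abs] using hbd x
    _ = M * ∫ x, |x| ∂κ := integral_const_mul _ _

private lemma dual_pair_bound {M : ℝ} (hM : 0 < M) (μ ν : Measure ℝ)
    [IsProbabilityMeasure μ] [IsProbabilityMeasure ν]
    (hμ : Integrable (fun x : ℝ => |x|) μ) (hν : Integrable (fun x : ℝ => |x|) ν)
    {f : ℝ → ℝ} (hf : ∀ x y, |f x - f y| ≤ M * |x - y|) :
    |(∫ x, f x ∂μ) - ∫ x, f x ∂ν| ≤ M * (∫ x, |x| ∂μ) + M * ∫ x, |x| ∂ν := by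
  obtain ⟨hintμ, hbμ⟩ := lip_integrable hM hf μ hμ
  obtain ⟨hintν, hbν⟩ := lip_integrable hM hf ν hν
  have hshift : ∀ (κ : Measure ℝ) [IsProbabilityMeasure κ],
      Integrable (fun x => f x - f 0) κ →
        ∫ x, f x ∂κ = (∫ x, (f x - f 0) ∂κ) + f 0 := by
    intro κ hκi hint
    have : ∫ x, ((f x - f 0) + f 0) ∂κ = (∫ x, (f x - f 0) ∂κ) + ∫ _x, f 0 ∂κ :=
      integral_add hint (integrable_const _)
    simpa [integral_const, measure_univ] using this
  rw [hshift μ hintμ, hshift ν hintν]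
  have : |(∫ x, (f x - f 0) ∂μ) + f 0 - ((∫ x, (f x - f 0) ∂ν) + f 0)|
      = |(∫ x, (f x - f 0) ∂μ) - ∫ x, (f x - f 0) ∂ν| := by congr 1; ring
  rw [this]
  calc |(∫ x, (f x - f 0) ∂μ) - ∫ x, (f x - f 0) ∂ν|
      ≤ |∫ x, (f x - f 0) ∂μ| + |∫ x, (f x - f 0) ∂ν| := abs_sub _ _
    _ ≤ M * (∫ x, |x| ∂μ) + M * ∫ x, |x| ∂ν := add_le_add hbμ hbν

end Dual


/-- The Wasserstein-1 distance in dual form for the cost `c(x,y) = M·|x−y|`: the supremum,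
over all functions `f` with `|f x − f y| ≤ M·|x−y|`, of `|∫ f dμ − ∫ f dν|`. -/
noncomputable def wassersteinDual (M : ℝ) (μ ν : Measure ℝ) : ℝ :=
  ⨆ f : {f : ℝ → ℝ // ∀ x y, |f x - f y| ≤ M * |x - y|},
    |(∫ x, (f : ℝ → ℝ) x ∂μ) - ∫ x, (f : ℝ → ℝ) x ∂ν|

/-- Estimating the Wasserstein-1 distance to a fixed target `Q` using QMC points:
`|W(P,Q) − W(Pⁿ,Q)| ≤ M · V(G) · D*({u_i})`, where `P` is the pushforward of the uniform
distribution on `[0,1]` under the bounded-variation generator `G` and `Pⁿ` is the empirical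
measure of the generated points. -/
theorem wasserstein_dual_diff_qmc_bound (G : ℝ → ℝ)
    (hG : eVariationOn G (Set.Icc 0 1) ≠ ⊤)
    (M : ℝ) (hM : 0 < M)
    {n : ℕ} (hn : 0 < n) (u : Fin n → ℝ) (hu : ∀ i, u i ∈ Set.Icc (0 : ℝ) 1)
    (Q : Measure ℝ) [IsProbabilityMeasure Q]
    (hQ : Integrable (fun x : ℝ => |x|) Q) :
    |wassersteinDual M (Measure.map G ((volume : Measure ℝ).restrict (Set.Icc 0 1))) Q -
        wassersteinDual M (empirical fun i => G (u i)) Q| ≤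
      M * (eVariationOn G (Set.Icc 0 1)).toReal * starDisc u := by
  classical
  set P : Measure ℝ := Measure.map G ((volume : Measure ℝ).restrict (Set.Icc 0 1)) with hPdef
  set Pn : Measure ℝ := empirical fun i => G (u i) with hPndef
  have hbvG : LocallyBoundedVariationOn G (Set.Icc (0:ℝ) 1) :=
    BoundedVariationOn.locallyBoundedVariationOn hG
  obtain ⟨p, q, hp, hq, hpq⟩ := hbvG.exists_monotoneOn_sub_monotoneOn
  have hGae : AEMeasurable G ((volume : Measure ℝ).restrict (Set.Icc 0 1)) := by
    have h1 : AEMeasurable (fun x => p x - q x) ((volume : Measure ℝ).restrict (Set.Icc 0 1)) :=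
      (aemeasurable_restrict_of_monotoneOn measurableSet_Icc hp).sub
        (aemeasurable_restrict_of_monotoneOn measurableSet_Icc hq)
    exact h1.congr (ae_of_all _ fun x => by rw [hpq]; rfl)
  haveI hRprob : IsProbabilityMeasure ((volume : Measure ℝ).restrict (Set.Icc 0 1)) := by
    constructor
    rw [Measure.restrict_apply_univ, Real.volume_Icc]
    norm_num
  haveI hPprob : IsProbabilityMeasure P := by
    constructor
    rw [hPdef, Measure.map_apply_of_aemeasurable hGae MeasurableSet.univ, Set.preimage_univ,
      Measure.restrict_apply_univ, Real.volume_Icc]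
    norm_num
  haveI hPnprob : IsProbabilityMeasure Pn := isProbabilityMeasure_empirical hn _
  -- first-moment integrability
  have hGbd : ∀ t ∈ Set.Icc (0:ℝ) 1,
      ‖G t‖ ≤ |G 0| + (eVariationOn G (Set.Icc 0 1)).toReal := by
    intro t ht
    have h3 : edist (G t) (G 0) ≤ eVariationOn G (Set.Icc 0 1) :=
      eVariationOn.edist_le G ht ⟨le_rfl, zero_le_one⟩
    have h4 : |G t - G 0| ≤ (eVariationOn G (Set.Icc 0 1)).toReal := by
      rw [← Real.dist_eq, dist_edist]
      exact ENNReal.toReal_mono hG h3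
    have h5 : |G t| - |G 0| ≤ |G t - G 0| := abs_sub_abs_le_abs_sub _ _
    rw [Real.norm_eq_abs]
    linarith
  have hGint : Integrable G ((volume : Measure ℝ).restrict (Set.Icc 0 1)) := by
    refine Integrable.mono'
      (integrable_const (|G 0| + (eVariationOn G (Set.Icc 0 1)).toReal))
      hGae.aestronglyMeasurable ?_
    exact (ae_restrict_iff' measurableSet_Icc).2 (ae_of_all _ hGbd)
  have hPint : Integrable (fun x : ℝ => |x|) P := by
    rw [hPdef, integrable_map_measure continuous_abs.aestronglyMeasurable hGae]
    exact hGint.abs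
  have hPnint : Integrable (fun x : ℝ => |x|) Pn := integrable_empirical hn _ _
  haveI : Nonempty {f : ℝ → ℝ // ∀ x y, |f x - f y| ≤ M * |x - y|} :=
    ⟨⟨fun _ => 0, fun x y => by simpa using mul_nonneg hM.le (abs_nonneg (x - y))⟩⟩
  set a : {f : ℝ → ℝ // ∀ x y, |f x - f y| ≤ M * |x - y|} → ℝ :=
    fun f => |(∫ x, (f : ℝ → ℝ) x ∂P) - ∫ x, (f : ℝ → ℝ) x ∂Q| with ha
  set b : {f : ℝ → ℝ // ∀ x y, |f x - f y| ≤ M * |x - y|} → ℝ :=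
    fun f => |(∫ x, (f : ℝ → ℝ) x ∂Pn) - ∫ x, (f : ℝ → ℝ) x ∂Q| with hb
  -- per-function bound
  have hptwise : ∀ f : {f : ℝ → ℝ // ∀ x y, |f x - f y| ≤ M * |x - y|},
      |a f - b f| ≤ M * (eVariationOn G (Set.Icc 0 1)).toReal * starDisc u := by
    rintro ⟨f, hf⟩
    have hfc : Continuous f := lip_continuous hM hf
    have hIP : ∫ x, f x ∂P = ∫ t in Set.Icc (0:ℝ) 1, f (G t) := by
      rw [hPdef]
      exact integral_map hGae hfc.aestronglyMeasurable
    have hIPn : ∫ x, f x ∂Pn = (∑ i, f (G (u i))) / n := by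
      rw [hPndef]
      exact integral_empirical _ _
    -- variation of f ∘ G
    have hlip : LipschitzWith (Real.toNNReal M) f := by
      rw [lipschitzWith_iff_dist_le_mul]
      intro x y
      rw [Real.dist_eq, Real.dist_eq, Real.coe_toNNReal M hM.le]
      exact hf x y
    have hcomp : eVariationOn (f ∘ G) (Set.Icc (0:ℝ) 1)
        ≤ (Real.toNNReal M : ℝ≥0∞) * eVariationOn G (Set.Icc (0:ℝ) 1) :=
      (hlip.lipschitzOnWith (s := Set.univ)).comp_eVariationOn_le (Set.mapsTo_univ _ _)
    have hne : eVariationOn (f ∘ G) (Set.Icc (0:ℝ) 1) ≠ ⊤ :=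
      ne_top_of_le_ne_top (ENNReal.mul_ne_top ENNReal.coe_ne_top hG) hcomp
    have hK := koksma hn u hu hne
    have hVle : (eVariationOn (f ∘ G) (Set.Icc (0:ℝ) 1)).toReal
        ≤ M * (eVariationOn G (Set.Icc 0 1)).toReal := by
      have := ENNReal.toReal_mono (ENNReal.mul_ne_top ENNReal.coe_ne_top hG) hcomp
      rwa [ENNReal.toReal_mul, ENNReal.coe_toReal, Real.coe_toNNReal M hM.le] at this
    have hKoksma : |(∑ i, f (G (u i))) / n - ∫ t in Set.Icc (0:ℝ) 1, f (G t)|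
        ≤ M * (eVariationOn G (Set.Icc 0 1)).toReal * starDisc u := by
      refine le_trans hK ?_
      exact mul_le_mul_of_nonneg_right hVle (starDisc_nonneg hn u)
    have hstep1 : |a ⟨f, hf⟩ - b ⟨f, hf⟩|
        ≤ |((∫ x, f x ∂P) - ∫ x, f x ∂Q) - ((∫ x, f x ∂Pn) - ∫ x, f x ∂Q)| := by
      rw [ha, hb]
      exact abs_abs_sub_abs_le_abs_sub _ _
    have hstep2 : ((∫ x, f x ∂P) - ∫ x, f x ∂Q) - ((∫ x, f x ∂Pn) - ∫ x, f x ∂Q)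
        = (∫ x, f x ∂P) - ∫ x, f x ∂Pn := by ring
    have hstep3 : |(∫ x, f x ∂P) - ∫ x, f x ∂Pn|
        = |(∑ i, f (G (u i))) / n - ∫ t in Set.Icc (0:ℝ) 1, f (G t)| := by
      rw [hIP, hIPn, abs_sub_comm]
    calc |a ⟨f, hf⟩ - b ⟨f, hf⟩|
        ≤ |((∫ x, f x ∂P) - ∫ x, f x ∂Q) - ((∫ x, f x ∂Pn) - ∫ x, f x ∂Q)| := hstep1
      _ = |(∑ i, f (G (u i))) / n - ∫ t in Set.Icc (0:ℝ) 1, f (G t)| := by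
          rw [hstep2, hstep3]
      _ ≤ M * (eVariationOn G (Set.Icc 0 1)).toReal * starDisc u := hKoksma
  -- bounded above
  have hbddP : BddAbove (Set.range a) := by
    refine ⟨M * (∫ x, |x| ∂P) + M * ∫ x, |x| ∂Q, ?_⟩
    rintro _ ⟨f, rfl⟩
    rw [ha]
    exact dual_pair_bound hM P Q hPint hQ f.2
  have hbddPn : BddAbove (Set.range b) := by
    refine ⟨M * (∫ x, |x| ∂Pn) + M * ∫ x, |x| ∂Q, ?_⟩
    rintro _ ⟨f, rfl⟩
    rw [hb]
    exact dual_pair_bound hM Pn Q hPnint hQ f.2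
  have hfinal := ciSup_abs_sub hbddP hbddPn hptwise
  have hWP : wassersteinDual M P Q = ⨆ f, a f := rfl
  have hWPn : wassersteinDual M Pn Q = ⨆ f, b f := rfl
  rw [hPdef] at hWP
  rw [hPndef] at hWPn
  rw [hWP, hWPn]
  exact hfinal
end KoksmaMono
end

section
/- Let d ≥ 1 and θ ∈ ℝ be such that 1 + 2θ cos(k π/(d+1)) ≥ 0 for all k ∈ {1,…,d} (this holds in particular when |θ| ≤ 1/2). Let Σ be the d × d symmetric tridiagonal Toeplitz matrix with diagonal entries 1, entries θ on the super- and sub-diagonal, and 0 elsewhere. Define the d × d matrix A by A_{ij} = (2/(d+1)) Σ_{k=1}^d √(1 + 2θ cos(k π/(d+1))) · sin(i k π/(d+1)) · sin(j k π/(d+1)). Then A is symmetric and A · A = Σ, i.e. A is a matrix square root of Σ. -/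
open Matrix

open Finset Real in
private lemma cos_full_sum (n : ℕ) (hn : 0 < n) (r : ℤ) (hr : ¬ (2 * (n:ℤ)) ∣ r) :
    ∑ m ∈ Finset.range (2 * n), Real.cos ((m : ℝ) * r * π / n) = 0 := by
  have hn' : (n:ℝ) ≠ 0 := Nat.cast_ne_zero.mpr hn.ne'
  set z : ℂ := Complex.exp ((r * π / n : ℝ) * Complex.I) with hz
  have hz1 : z ≠ 1 := by
    rw [hz, Ne, Complex.exp_eq_one_iff]
    rintro ⟨k, hk⟩
    apply hr
    have h2 : ((r * π / n : ℝ) : ℂ) = ((k * (2 * π) : ℝ) : ℂ) := by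
      have := mul_right_cancel₀ Complex.I_ne_zero
        (hk.trans (by push_cast; ring : ((k:ℂ) * (2 * ↑π * Complex.I)) = ((k * (2 * π) : ℝ) : ℂ) * Complex.I))
      exact this
    have h3 : (r : ℝ) * π / n = k * (2 * π) := Complex.ofReal_inj.mp h2
    have h4 : (r : ℝ) = 2 * n * k := by
      field_simp at h3
      nlinarith [Real.pi_pos, h3]
    exact ⟨k, by exact_mod_cast h4⟩
  have hnC : (n:ℂ) ≠ 0 := Nat.cast_ne_zero.mpr hn.ne'
  have hzpow : z ^ (2 * n) = 1 := by
    rw [hz, ← Complex.exp_nat_mul]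
    rw [show ((2 * n : ℕ) : ℂ) * (((r * π / n : ℝ) : ℂ) * Complex.I) = (r : ℂ) * (2 * ↑π * Complex.I) by
      push_cast; field_simp]
    exact Complex.exp_int_mul_two_pi_mul_I r
  have hgeom : ∑ m ∈ Finset.range (2 * n), z ^ m = 0 := by
    rw [geom_sum_eq hz1, hzpow, sub_self, zero_div]
  have hre : ∀ m : ℕ, (z ^ m).re = Real.cos ((m : ℝ) * r * π / n) := by
    intro m
    rw [hz, ← Complex.exp_nat_mul,
      show ((m : ℕ) : ℂ) * (((r * π / n : ℝ) : ℂ) * Complex.I) = (((m : ℝ) * r * π / n : ℝ) : ℂ) * Complex.I by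
        push_cast; ring]
    exact Complex.exp_ofReal_mul_I_re _
  calc ∑ m ∈ Finset.range (2 * n), Real.cos ((m : ℝ) * r * π / n)
      = (∑ m ∈ Finset.range (2 * n), z ^ m).re := by
        rw [Complex.re_sum]; exact (Finset.sum_congr rfl fun m _ => (hre m).symm)
    _ = 0 := by rw [hgeom]; rfl

open Finset Real in
private lemma S_even (d : ℕ) (r : ℤ) (hev : (2:ℤ) ∣ r) (hr : ¬ (2 * ((d:ℤ) + 1)) ∣ r) :
    ∑ m ∈ Finset.range d, Real.cos (((m:ℝ) + 1) * r * π / ((d:ℝ) + 1)) = -1 := by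
  obtain ⟨t, rfl⟩ := hev
  have hfull := cos_full_sum (d + 1) (Nat.succ_pos d) (2 * t) (by push_cast at hr ⊢; exact_mod_cast hr)
  have hnd : ((d:ℝ) + 1) ≠ 0 := by positivity
  rw [show 2 * (d + 1) = (d + 1) + (d + 1) by ring, Finset.sum_range_add] at hfull
  have hshift : ∀ m ∈ Finset.range (d + 1),
      Real.cos ((((d + 1) + m : ℕ) : ℝ) * (2 * t : ℤ) * π / ((d:ℕ) + 1 : ℕ)) =
      Real.cos (((m : ℕ) : ℝ) * (2 * t : ℤ) * π / ((d:ℕ) + 1 : ℕ)) := by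
    intro m _
    rw [show (((d + 1) + m : ℕ) : ℝ) * ((2 * t : ℤ) : ℝ) * π / ((d:ℕ) + 1 : ℕ)
        = ((m : ℕ) : ℝ) * ((2 * t : ℤ) : ℝ) * π / ((d:ℕ) + 1 : ℕ) + (t : ℝ) * (2 * π) by
      push_cast; field_simp; ring]
    exact Real.cos_add_int_mul_two_pi _ t
  rw [Finset.sum_congr rfl hshift] at hfull
  have h2 : ∑ m ∈ Finset.range (d + 1), Real.cos (((m : ℕ) : ℝ) * ((2 * t : ℤ) : ℝ) * π / ((d:ℕ) + 1 : ℕ)) = 0 := by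
    push_cast at hfull ⊢
    linarith [hfull]
  rw [Finset.sum_range_succ'] at h2
  simp only [Nat.cast_zero, zero_mul, zero_div, Real.cos_zero] at h2
  have h3 : ∀ m ∈ Finset.range d,
      Real.cos ((((m + 1 : ℕ)) : ℝ) * ((2 * t : ℤ) : ℝ) * π / ((d:ℕ) + 1 : ℕ))
      = Real.cos (((m:ℝ) + 1) * ((2 * t : ℤ) : ℝ) * π / ((d:ℝ) + 1)) := by
    intro m _; push_cast; ring_nf
  rw [Finset.sum_congr rfl h3] at h2
  linarith [h2]

open Finset Real in
private lemma S_odd (d : ℕ) (r : ℤ) (hodd : ¬ (2:ℤ) ∣ r) :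
    ∑ m ∈ Finset.range d, Real.cos (((m:ℝ) + 1) * r * π / ((d:ℝ) + 1)) = 0 := by
  obtain ⟨t, rfl⟩ : ∃ t, r = 2 * t + 1 := ⟨(r - 1) / 2, by omega⟩
  have hnd : ((d:ℝ) + 1) ≠ 0 := by positivity
  have hrefl := Finset.sum_range_reflect
    (fun m => Real.cos (((m:ℝ) + 1) * ((2 * t + 1 : ℤ) : ℝ) * π / ((d:ℝ) + 1))) d
  have hneg : ∀ m ∈ Finset.range d,
      Real.cos ((((d - 1 - m : ℕ) : ℝ) + 1) * ((2 * t + 1 : ℤ) : ℝ) * π / ((d:ℝ) + 1))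
      = -Real.cos (((m:ℝ) + 1) * ((2 * t + 1 : ℤ) : ℝ) * π / ((d:ℝ) + 1)) := by
    intro m hm
    rw [Finset.mem_range] at hm
    have hcast : (((d - 1 - m : ℕ) : ℝ) + 1) = (d : ℝ) - m := by
      have h : d - 1 - m = d - (m + 1) := by omega
      rw [h]
      have h2 : ((d - (m + 1) : ℕ) : ℝ) = (d : ℝ) - (m + 1) := by
        have := Nat.cast_sub (by omega : m + 1 ≤ d) (R := ℝ)
        push_cast at this ⊢; linarith
      rw [h2]; ring
    rw [hcast,
      show (d : ℝ) - m = ((d:ℝ) + 1) - ((m:ℝ) + 1) by ring,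
      show (((d:ℝ) + 1) - ((m:ℝ) + 1)) * ((2 * t + 1 : ℤ) : ℝ) * π / ((d:ℝ) + 1)
        = (π + (t:ℝ) * (2 * π)) - ((m:ℝ) + 1) * ((2 * t + 1 : ℤ) : ℝ) * π / ((d:ℝ) + 1) by
        push_cast; field_simp; ring,
      Real.cos_sub]
    have hc : Real.cos (π + (t:ℝ) * (2 * π)) = -1 := by
      rw [Real.cos_add_int_mul_two_pi π t, Real.cos_pi]
    have hs : Real.sin (π + (t:ℝ) * (2 * π)) = 0 := by
      rw [Real.sin_add_int_mul_two_pi π t, Real.sin_pi]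
    rw [hc, hs]; ring
  rw [Finset.sum_congr rfl hneg] at hrefl
  rw [Finset.sum_neg_distrib] at hrefl
  linarith [hrefl]

open Finset Real in
private lemma orth (d : ℕ) (p q : ℕ) (hp : 1 ≤ p) (hp' : p ≤ d) (hq : q ≤ d + 1) :
    ∑ m ∈ Finset.range d,
      Real.sin (((m:ℝ) + 1) * p * π / ((d:ℝ) + 1)) * Real.sin (((m:ℝ) + 1) * q * π / ((d:ℝ) + 1))
      = if p = q then ((d:ℝ) + 1) / 2 else 0 := by
  have hnd : ((d:ℝ) + 1) ≠ 0 := by positivity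
  set r1 : ℤ := (p : ℤ) - q with hr1
  set r2 : ℤ := (p : ℤ) + q with hr2
  have hterm : ∀ m ∈ Finset.range d,
      Real.sin (((m:ℝ) + 1) * p * π / ((d:ℝ) + 1)) * Real.sin (((m:ℝ) + 1) * q * π / ((d:ℝ) + 1))
      = (Real.cos (((m:ℝ) + 1) * r1 * π / ((d:ℝ) + 1)) - Real.cos (((m:ℝ) + 1) * r2 * π / ((d:ℝ) + 1))) / 2 := by
    intro m _
    rw [show ((m:ℝ) + 1) * r1 * π / ((d:ℝ) + 1)
        = ((m:ℝ) + 1) * p * π / ((d:ℝ) + 1) - ((m:ℝ) + 1) * q * π / ((d:ℝ) + 1) by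
      rw [hr1]; push_cast; ring,
      show ((m:ℝ) + 1) * r2 * π / ((d:ℝ) + 1)
        = ((m:ℝ) + 1) * p * π / ((d:ℝ) + 1) + ((m:ℝ) + 1) * q * π / ((d:ℝ) + 1) by
      rw [hr2]; push_cast; ring,
      Real.cos_sub, Real.cos_add]
    ring
  rw [Finset.sum_congr rfl hterm, ← Finset.sum_div, Finset.sum_sub_distrib]
  by_cases hpq : p = q
  · subst hpq
    have h1 : ∑ m ∈ Finset.range d, Real.cos (((m:ℝ) + 1) * r1 * π / ((d:ℝ) + 1)) = d := by
      have h : r1 = 0 := by omega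
      rw [h]
      simp
    have h2 : ∑ m ∈ Finset.range d, Real.cos (((m:ℝ) + 1) * r2 * π / ((d:ℝ) + 1)) = -1 := by
      apply S_even d r2 ⟨p, by omega⟩
      intro hdvd
      have habs : (2 * ((d:ℤ) + 1)) ≤ r2 := Int.le_of_dvd (by rw [hr2]; omega) hdvd
      rw [hr2] at habs; omega
    rw [h1, h2, if_pos rfl]; ring
  · rw [if_neg hpq]
    have hne : (p : ℤ) ≠ (q : ℤ) := by exact_mod_cast hpq
    by_cases hev : (2:ℤ) ∣ r1
    · have hev2 : (2:ℤ) ∣ r2 := by rw [hr2]; rw [hr1] at hev; omega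
      have h1 := S_even d r1 hev (by
        intro hdvd
        have habs : (2 * ((d:ℤ) + 1)) ≤ |r1| := Int.le_of_dvd (abs_pos.mpr (by rw [hr1]; omega)) ((dvd_abs _ _).mpr hdvd)
        have hb : |r1| ≤ (d:ℤ) + 1 := abs_le.mpr (by rw [hr1]; omega)
        omega)
      have h2 := S_even d r2 hev2 (by
        intro hdvd
        have habs : (2 * ((d:ℤ) + 1)) ≤ r2 := Int.le_of_dvd (by rw [hr2]; omega) hdvd
        rw [hr2] at habs; omega)
      rw [h1, h2]; ring
    · have hodd2 : ¬ (2:ℤ) ∣ r2 := by rw [hr2]; rw [hr1] at hev; omega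
      rw [S_odd d r1 hev, S_odd d r2 hodd2]; ring

open Finset in
private lemma quad {ι : Type*} [Fintype ι] [DecidableEq ι] (c h : ℝ) (r u v : ι → ℝ) (s : ι → ι → ℝ)
    (horth : ∀ k l : ι, ∑ m : ι, s m k * s m l = if k = l then h else 0) :
    ∑ m : ι, (c * ∑ k : ι, r k * u k * s m k) * (c * ∑ l : ι, r l * s m l * v l)
      = c * c * h * ∑ k : ι, (r k * r k) * (u k * v k) := by
  have h1 : ∀ m : ι, (c * ∑ k : ι, r k * u k * s m k) * (c * ∑ l : ι, r l * s m l * v l)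
      = c * c * ∑ k : ι, ∑ l : ι, (r k * r l * u k * v l) * (s m k * s m l) := by
    intro m
    calc (c * ∑ k : ι, r k * u k * s m k) * (c * ∑ l : ι, r l * s m l * v l)
        = c * c * ((∑ k : ι, r k * u k * s m k) * (∑ l : ι, r l * s m l * v l)) := by ring
      _ = c * c * ∑ k : ι, ∑ l : ι, (r k * u k * s m k) * (r l * s m l * v l) := by
            rw [Finset.sum_mul_sum]
      _ = c * c * ∑ k : ι, ∑ l : ι, (r k * r l * u k * v l) * (s m k * s m l) := by
            congr 1
            exact Finset.sum_congr rfl fun k _ => Finset.sum_congr rfl fun l _ => by ring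
  rw [Finset.sum_congr rfl (fun m _ => h1 m), ← Finset.mul_sum]
  have hswap : ∑ m : ι, ∑ k : ι, ∑ l : ι, (r k * r l * u k * v l) * (s m k * s m l)
      = ∑ k : ι, ∑ l : ι, ∑ m : ι, (r k * r l * u k * v l) * (s m k * s m l) := by
    rw [Finset.sum_comm]
    exact Finset.sum_congr rfl fun k _ => Finset.sum_comm
  rw [hswap]
  have h2 : ∀ k l : ι, ∑ m : ι, (r k * r l * u k * v l) * (s m k * s m l)
      = if k = l then (r k * r l * u k * v l) * h else 0 := by
    intro k l
    rw [← Finset.mul_sum, horth k l]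
    split <;> simp
  rw [Finset.sum_congr rfl (fun k _ =>
    (Finset.sum_congr rfl (fun l _ => h2 k l)).trans
      ((Finset.sum_ite_eq Finset.univ k (fun l => (r k * r l * u k * v l) * h)).trans
        (if_pos (Finset.mem_univ k))))]
  rw [Finset.mul_sum, Finset.mul_sum]
  exact Finset.sum_congr rfl fun k _ => by ring

/-- Closed-form matrix square root of the symmetric tridiagonal Toeplitz matrix `Σ` with
diagonal `1` and off-diagonal `θ`, assuming all eigenvalues `1 + 2θ cos(kπ/(d+1))` are
nonnegative: the matrix `A` with entries
`A_{ij} = (2/(d+1)) ∑_k √(1 + 2θ cos(kπ/(d+1))) sin(i k π/(d+1)) sin(j k π/(d+1))`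
is symmetric and satisfies `A · A = Σ`. -/
theorem tridiag_toeplitz_sqrt (d : ℕ) (hd : 1 ≤ d) (θ : ℝ)
    (hθ : ∀ k : Fin d, 0 ≤ 1 + 2 * θ * Real.cos (((k : ℝ) + 1) * Real.pi / ((d : ℝ) + 1)))
    (S A : Matrix (Fin d) (Fin d) ℝ)
    (hS : ∀ i j : Fin d,
      S i j = if i = j then 1 else if ((i : ℤ) - (j : ℤ)).natAbs = 1 then θ else 0)
    (hA : ∀ i j : Fin d,
      A i j = (2 / ((d : ℝ) + 1)) * ∑ k : Fin d,
        Real.sqrt (1 + 2 * θ * Real.cos (((k : ℝ) + 1) * Real.pi / ((d : ℝ) + 1))) *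
          Real.sin (((i : ℝ) + 1) * ((k : ℝ) + 1) * Real.pi / ((d : ℝ) + 1)) *
          Real.sin (((j : ℝ) + 1) * ((k : ℝ) + 1) * Real.pi / ((d : ℝ) + 1))) :
    A.IsSymm ∧ A * A = S := by
  have hnd : ((d:ℝ) + 1) ≠ 0 := by positivity
  constructor
  · ext i j
    rw [Matrix.transpose_apply, hA, hA]
    congr 1
    exact Finset.sum_congr rfl fun k _ => by ring
  · ext i j
    rw [Matrix.mul_apply, hS]
    simp only [hA]
    -- Fin-indexed orthogonality, index in the first slot
    have horth1 : ∀ k l : Fin d,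
        ∑ m : Fin d, Real.sin (((m:ℝ) + 1) * ((k:ℝ) + 1) * Real.pi / ((d:ℝ) + 1)) *
          Real.sin (((m:ℝ) + 1) * ((l:ℝ) + 1) * Real.pi / ((d:ℝ) + 1))
        = if k = l then ((d:ℝ) + 1) / 2 else 0 := by
      intro k l
      have h := orth d ((k:ℕ) + 1) ((l:ℕ) + 1) (by omega)
        (by have := k.isLt; omega) (by have := l.isLt; omega)
      rw [← Fin.sum_univ_eq_sum_range (fun m : ℕ =>
        Real.sin (((m:ℝ) + 1) * (((k:ℕ) + 1 : ℕ) : ℝ) * Real.pi / ((d:ℝ) + 1)) *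
        Real.sin (((m:ℝ) + 1) * (((l:ℕ) + 1 : ℕ) : ℝ) * Real.pi / ((d:ℝ) + 1)))] at h
      push_cast at h
      rw [h]
      by_cases hkl : k = l
      · simp [hkl]
      · rw [if_neg (by simpa [Fin.ext_iff] using hkl), if_neg hkl]
    -- step 1 : collapse the double sum
    rw [quad (ι := Fin d) (2 / ((d:ℝ) + 1)) (((d:ℝ) + 1) / 2)
      (fun k : Fin d => Real.sqrt (1 + 2 * θ * Real.cos (((k : ℝ) + 1) * Real.pi / ((d : ℝ) + 1))))
      (fun k : Fin d => Real.sin (((i : ℝ) + 1) * ((k : ℝ) + 1) * Real.pi / ((d : ℝ) + 1)))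
      (fun k : Fin d => Real.sin (((j : ℝ) + 1) * ((k : ℝ) + 1) * Real.pi / ((d : ℝ) + 1)))
      (fun m k : Fin d => Real.sin (((m : ℝ) + 1) * ((k : ℝ) + 1) * Real.pi / ((d : ℝ) + 1)))
      horth1]
    -- remove the square roots
    have hsqrt : ∑ k : Fin d,
        (Real.sqrt (1 + 2 * θ * Real.cos (((k : ℝ) + 1) * Real.pi / ((d : ℝ) + 1))) *
         Real.sqrt (1 + 2 * θ * Real.cos (((k : ℝ) + 1) * Real.pi / ((d : ℝ) + 1)))) *
          (Real.sin (((i : ℝ) + 1) * ((k : ℝ) + 1) * Real.pi / ((d : ℝ) + 1)) *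
           Real.sin (((j : ℝ) + 1) * ((k : ℝ) + 1) * Real.pi / ((d : ℝ) + 1)))
        = ∑ k : Fin d,
        (1 + 2 * θ * Real.cos (((k : ℝ) + 1) * Real.pi / ((d : ℝ) + 1))) *
          (Real.sin (((i : ℝ) + 1) * ((k : ℝ) + 1) * Real.pi / ((d : ℝ) + 1)) *
           Real.sin (((j : ℝ) + 1) * ((k : ℝ) + 1) * Real.pi / ((d : ℝ) + 1))) :=
      Finset.sum_congr rfl fun k _ => by rw [Real.mul_self_sqrt (hθ k)]
    rw [hsqrt]
    -- orthogonality with index in the second slot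
    have horth2 : ∀ p q : ℕ, 1 ≤ p → p ≤ d → q ≤ d + 1 →
        ∑ k : Fin d, Real.sin ((p:ℝ) * ((k:ℝ) + 1) * Real.pi / ((d:ℝ) + 1)) *
          Real.sin ((q:ℝ) * ((k:ℝ) + 1) * Real.pi / ((d:ℝ) + 1))
        = if p = q then ((d:ℝ) + 1) / 2 else 0 := by
      intro p q hp hp' hq
      have h := orth d p q hp hp' hq
      rw [← Fin.sum_univ_eq_sum_range (fun m : ℕ =>
        Real.sin (((m:ℝ) + 1) * (p : ℝ) * Real.pi / ((d:ℝ) + 1)) *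
        Real.sin (((m:ℝ) + 1) * (q : ℝ) * Real.pi / ((d:ℝ) + 1)))] at h
      rw [← h]
      exact Finset.sum_congr rfl fun m _ => by
        rw [show ((p:ℝ)) * ((m:ℝ) + 1) * Real.pi / ((d:ℝ) + 1)
            = ((m:ℝ) + 1) * (p:ℝ) * Real.pi / ((d:ℝ) + 1) by ring,
          show ((q:ℝ)) * ((m:ℝ) + 1) * Real.pi / ((d:ℝ) + 1)
            = ((m:ℝ) + 1) * (q:ℝ) * Real.pi / ((d:ℝ) + 1) by ring]
    have hO1 : ∑ k : Fin d,
        Real.sin (((i:ℝ) + 1) * ((k:ℝ) + 1) * Real.pi / ((d:ℝ) + 1)) *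
          Real.sin (((j:ℝ) + 1) * ((k:ℝ) + 1) * Real.pi / ((d:ℝ) + 1))
        = if (i:ℕ) = (j:ℕ) then ((d:ℝ) + 1) / 2 else 0 := by
      have h := horth2 ((i:ℕ) + 1) ((j:ℕ) + 1) (by omega) (by have := i.isLt; omega)
        (by have := j.isLt; omega)
      push_cast at h
      exact h
    have hO2 : ∑ k : Fin d,
        Real.sin (((i:ℝ) + 1) * ((k:ℝ) + 1) * Real.pi / ((d:ℝ) + 1)) *
          Real.sin (((j:ℝ) + 2) * ((k:ℝ) + 1) * Real.pi / ((d:ℝ) + 1))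
        = if (i:ℕ) = (j:ℕ) + 1 then ((d:ℝ) + 1) / 2 else 0 := by
      have h := horth2 ((i:ℕ) + 1) ((j:ℕ) + 2) (by omega) (by have := i.isLt; omega)
        (by have := j.isLt; omega)
      push_cast at h
      exact h
    have hO3 : ∑ k : Fin d,
        Real.sin (((i:ℝ) + 1) * ((k:ℝ) + 1) * Real.pi / ((d:ℝ) + 1)) *
          Real.sin ((j:ℝ) * ((k:ℝ) + 1) * Real.pi / ((d:ℝ) + 1))
        = if (i:ℕ) + 1 = (j:ℕ) then ((d:ℝ) + 1) / 2 else 0 := by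
      have h := horth2 ((i:ℕ) + 1) ((j:ℕ)) (by omega) (by have := i.isLt; omega)
        (by have := j.isLt; omega)
      push_cast at h
      exact h
    -- expand the eigenvalue action
    have hexp : ∀ k : Fin d, (1 + 2 * θ * Real.cos (((k : ℝ) + 1) * Real.pi / ((d : ℝ) + 1))) *
          (Real.sin (((i : ℝ) + 1) * ((k : ℝ) + 1) * Real.pi / ((d : ℝ) + 1)) *
           Real.sin (((j : ℝ) + 1) * ((k : ℝ) + 1) * Real.pi / ((d : ℝ) + 1)))
        = Real.sin (((i:ℝ) + 1) * ((k:ℝ) + 1) * Real.pi / ((d:ℝ) + 1)) *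
            Real.sin (((j:ℝ) + 1) * ((k:ℝ) + 1) * Real.pi / ((d:ℝ) + 1))
          + θ * (Real.sin (((i:ℝ) + 1) * ((k:ℝ) + 1) * Real.pi / ((d:ℝ) + 1)) *
              Real.sin (((j:ℝ) + 2) * ((k:ℝ) + 1) * Real.pi / ((d:ℝ) + 1))
            + Real.sin (((i:ℝ) + 1) * ((k:ℝ) + 1) * Real.pi / ((d:ℝ) + 1)) *
              Real.sin ((j:ℝ) * ((k:ℝ) + 1) * Real.pi / ((d:ℝ) + 1))) := by
      intro k
      have h2cos : Real.sin (((j:ℝ) + 2) * ((k:ℝ) + 1) * Real.pi / ((d:ℝ) + 1))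
          + Real.sin ((j:ℝ) * ((k:ℝ) + 1) * Real.pi / ((d:ℝ) + 1))
          = 2 * Real.cos (((k:ℝ) + 1) * Real.pi / ((d:ℝ) + 1)) *
            Real.sin (((j:ℝ) + 1) * ((k:ℝ) + 1) * Real.pi / ((d:ℝ) + 1)) := by
        rw [show ((j:ℝ) + 2) * ((k:ℝ) + 1) * Real.pi / ((d:ℝ) + 1)
            = ((j:ℝ) + 1) * ((k:ℝ) + 1) * Real.pi / ((d:ℝ) + 1) + ((k:ℝ) + 1) * Real.pi / ((d:ℝ) + 1) by ring,
          show (j:ℝ) * ((k:ℝ) + 1) * Real.pi / ((d:ℝ) + 1)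
            = ((j:ℝ) + 1) * ((k:ℝ) + 1) * Real.pi / ((d:ℝ) + 1) - ((k:ℝ) + 1) * Real.pi / ((d:ℝ) + 1) by ring,
          Real.sin_add, Real.sin_sub]
        ring
      linear_combination (θ * Real.sin (((i:ℝ) + 1) * ((k:ℝ) + 1) * Real.pi / ((d:ℝ) + 1))) * h2cos.symm
    rw [Finset.sum_congr rfl (fun k _ => hexp k), Finset.sum_add_distrib, ← Finset.mul_sum,
      Finset.sum_add_distrib, hO1, hO2, hO3]
    by_cases h1 : (i:ℕ) = (j:ℕ)
    · rw [if_pos h1, if_neg (by omega : ¬ ((i:ℕ) = (j:ℕ) + 1)),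
        if_neg (by omega : ¬ ((i:ℕ) + 1 = (j:ℕ))), if_pos (Fin.ext h1)]
      field_simp; ring
    · rw [if_neg h1,
        if_neg (fun h : i = j => h1 (congrArg Fin.val h))]
      by_cases h2 : (i:ℕ) = (j:ℕ) + 1
      · rw [if_pos h2, if_neg (by omega : ¬ ((i:ℕ) + 1 = (j:ℕ))),
          if_pos (by omega : ((i:ℤ) - (j:ℤ)).natAbs = 1)]
        field_simp; ring
      · by_cases h3 : (i:ℕ) + 1 = (j:ℕ)
        · rw [if_neg (by omega : ¬ ((i:ℕ) = (j:ℕ) + 1)), if_pos h3,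
            if_pos (by omega : ((i:ℤ) - (j:ℤ)).natAbs = 1)]
          field_simp; ring
        · rw [if_neg (by omega : ¬ ((i:ℕ) = (j:ℕ) + 1)), if_neg h3,
            if_neg (by omega : ¬ (((i:ℤ) - (j:ℤ)).natAbs = 1))]
          ring
end
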